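/- arXiv:math/0405326 — 6 statements merged into one kernel-verified Lean document; each statement's English description precedes it below -/
import Mathlib

section
/- For every integer n ≥ 1 and every graph G of order n, D_0(G) ≥ log* n − log* log* n − 1 (equivalently, D_0(G) + log* log* n + 1 ≥ log* n); hence the succinctness function q_0(n) = min{D_0(G) : G has order n} satisfies q_0(n) ≥ log* n − log* log* n − 1 for all n. -/
namespace PaperFO

/-- First-order formulas in a language with equality `eq` and one binary
relation symbol `rel` (adjacency `~` for graphs, the arc relation `↦` for
digraphs).  Variables are indexed by natural numbers (variable `xᵢ` of the
paper corresponds to `i - 1 : ℕ`). -/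
inductive Fml : Type
  | eq : ℕ → ℕ → Fml
  | rel : ℕ → ℕ → Fml
  | not : Fml → Fml
  | and : Fml → Fml → Fml
  | or : Fml → Fml → Fml
  | all : ℕ → Fml → Fml
  | ex : ℕ → Fml → Fml

namespace Fml

/-- Truth of a formula in the structure `(V, r)` under the assignment `σ`. -/
def eval {V : Type} (r : V → V → Prop) (σ : ℕ → V) : Fml → Prop
  | eq i j => σ i = σ j
  | rel i j => r (σ i) (σ j)
  | not φ => ¬ eval r σ φ
  | and φ ψ => eval r σ φ ∧ eval r σ ψ
  | or φ ψ => eval r σ φ ∨ eval r σ ψ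
  | all i φ => ∀ v : V, eval r (Function.update σ i v) φ
  | ex i φ => ∃ v : V, eval r (Function.update σ i v) φ

/-- The free variables of a formula. -/
def freeVars : Fml → Finset ℕ
  | eq i j => {i, j}
  | rel i j => {i, j}
  | not φ => freeVars φ
  | and φ ψ => freeVars φ ∪ freeVars ψ
  | or φ ψ => freeVars φ ∪ freeVars ψ
  | all i φ => (freeVars φ).erase i
  | ex i φ => (freeVars φ).erase i

/-- A sentence is a formula without free variables. -/
def IsSentence (φ : Fml) : Prop := φ.freeVars = ∅

/-- The quantifier depth (= quantifier rank) of a formula: the maximum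
number of nested quantifiers. -/
def depth : Fml → ℕ
  | eq _ _ => 0
  | rel _ _ => 0
  | not φ => depth φ
  | and φ ψ => max (depth φ) (depth ψ)
  | or φ ψ => max (depth φ) (depth ψ)
  | all _ φ => depth φ + 1
  | ex _ φ => depth φ + 1

/-- A formula is atomic if it is of the form `x = y` or `x ~ y`. -/
def IsAtomic : Fml → Prop
  | eq _ _ => True
  | rel _ _ => True
  | _ => False

/-- Negations occur only in front of atomic subformulas. -/
def NegAtomic : Fml → Prop
  | eq _ _ => True
  | rel _ _ => True
  | not φ => IsAtomic φ
  | and φ ψ => NegAtomic φ ∧ NegAtomic ψ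
  | or φ ψ => NegAtomic φ ∧ NegAtomic ψ
  | all _ φ => NegAtomic φ
  | ex _ φ => NegAtomic φ

/-- The set of maximal sequences of nested quantifiers of a formula,
recorded as lists of Booleans read from the outermost quantifier inwards
(`true` = `∃`, `false` = `∀`).  Every sequence of nested quantifiers of the
formula is a (contiguous) subsequence of one of these. -/
def qstrings : Fml → Set (List Bool)
  | eq _ _ => {[]}
  | rel _ _ => {[]}
  | not φ => qstrings φ
  | and φ ψ => qstrings φ ∪ qstrings ψ
  | or φ ψ => qstrings φ ∪ qstrings ψ
  | all _ φ => (List.cons false) '' qstrings φ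
  | ex _ φ => (List.cons true) '' qstrings φ

end Fml

/-- The number of quantifier alternations (occurrences of `∀∃` or `∃∀`) in a
sequence of nested quantifiers. -/
def altCount : List Bool → ℕ
  | [] => 0
  | [_] => 0
  | a :: b :: l => (if a = b then 0 else 1) + altCount (b :: l)

namespace Fml

/-- Every sequence of nested quantifiers has at most `a` quantifier
alternations. -/
def AltLe (φ : Fml) (a : ℕ) : Prop := ∀ s ∈ φ.qstrings, altCount s ≤ a

/-- An `a`-alternating formula: negations occur only in front of atomic
subformulas and every sequence of nested quantifiers has at most `a`
quantifier alternations. -/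
def AltFml (a : ℕ) (φ : Fml) : Prop := φ.NegAtomic ∧ φ.AltLe a

/-- A 0-alternating formula: negations occur only in front of atomic
subformulas and no sequence of nested quantifiers contains a quantifier
alternation. -/
def ZeroAlt (φ : Fml) : Prop := φ.NegAtomic ∧ φ.AltLe 0

end Fml

/-- `logStar n` is the minimum number of iterations of the binary logarithm
needed to bring `n` to `1` or below. -/
def logStar (n : ℕ) : ℕ :=
  if h : n ≤ 1 then 0 else logStar (Nat.log 2 n) + 1
decreasing_by exact Nat.log_lt_self 2 (by omega)

/-- The tower function: `tower 0 = 1`, `tower (i+1) = 2 ^ tower i`. -/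
def tower : ℕ → ℕ
  | 0 => 1
  | i + 1 => 2 ^ tower i

end PaperFO

namespace PaperFO

/-- A sentence is true on the graph `G` (graphs interpret `Fml.rel` as the
adjacency relation `~`). -/
def GModels {V : Type} (G : SimpleGraph V) (φ : Fml) : Prop :=
  ∀ σ : ℕ → V, φ.eval G.Adj σ

/-- The sentence `φ` defines the graph `G`: it is a sentence, it is true on
`G`, and it fails on every (finite, nonempty) graph not isomorphic to `G`. -/
def Defines {V : Type} (G : SimpleGraph V) (φ : Fml) : Prop :=
  φ.IsSentence ∧ GModels G φ ∧
    ∀ (W : Type) (_ : Fintype W) (_ : Nonempty W) (H : SimpleGraph W),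
      ¬ Nonempty (G ≃g H) → ¬ GModels H φ

end PaperFO

namespace PaperFO


/-!
A `0`-alternating sentence is a positive Boolean combination of sentences `∃x ψ` with `ψ`
purely existential and sentences `∀x ψ` with `ψ` purely universal. Universal formulas pass to
induced subgraphs. An existential formula of depth `≤ D` true in `G` stays true in `G[S]` as soon
as `S` is built in `D` stages, stage `j + 1` containing, for each `j`-tuple from stage `j`, a
realization of each rank-`(D - j - 1)` type of its one-point extensions: this is the
Ehrenfeucht–Fraïssé game for the existential player, played inside `S`. Counting types bounds
`|S|` by a tower of `D` twos over a cubic in `D`. Since `φ` defines `G`, `G[S] ≅ G`, so `n ≤ |S|`,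
and taking `log*` gives the bound.
-/

def expTower : ℕ → ℕ → ℕ
  | 0, b => b
  | k + 1, b => 2 ^ expTower k b

theorem expTower_mono (k : ℕ) : Monotone (expTower k) := by
  intro a b h
  induction k with
  | zero => exact h
  | succ k ih => exact Nat.pow_le_pow_right two_pos ih

theorem expTower_le_expTower_of_le {k k' : ℕ} (b : ℕ) (h : k ≤ k') :
    expTower k b ≤ expTower k' b := by
  induction h with
  | refl => exact le_rfl
  | step _ ih => exact ih.trans Nat.lt_two_pow_self.le

theorem le_expTower (k b : ℕ) : b ≤ expTower k b :=
  expTower_le_expTower_of_le b (Nat.zero_le k)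

theorem two_pow_add_le_two_pow_add (x c : ℕ) : 2 ^ x + c ≤ 2 ^ (x + c) := by
  have hx : 1 ≤ 2 ^ x := Nat.one_le_two_pow
  have hc : c + 1 ≤ 2 ^ c := Nat.lt_two_pow_self
  calc 2 ^ x + c ≤ 2 ^ x * (c + 1) := by nlinarith
    _ ≤ 2 ^ x * 2 ^ c := Nat.mul_le_mul_left _ hc
    _ = 2 ^ (x + c) := (pow_add 2 x c).symm

theorem expTower_add_le (k a c : ℕ) : expTower k a + c ≤ expTower k (a + c) := by
  induction k with
  | zero => exact le_rfl
  | succ k ih => exact (two_pow_add_le_two_pow_add _ c).trans (Nat.pow_le_pow_right two_pos ih)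

theorem expTower_add_expTower_le (k : ℕ) {a b : ℕ} (ha : 1 ≤ a) (hb : 1 ≤ b) :
    expTower k a + expTower k b ≤ expTower k (a + b) := by
  induction k with
  | zero => exact le_rfl
  | succ k ih =>
    have two_le {c : ℕ} (hc : 1 ≤ c) : 2 ≤ 2 ^ expTower k c :=
      Nat.one_lt_two_pow (by have := le_expTower k c; omega)
    calc 2 ^ expTower k a + 2 ^ expTower k b ≤ 2 ^ expTower k a * 2 ^ expTower k b :=
          Nat.add_le_mul (two_le ha) (two_le hb)
      _ = 2 ^ (expTower k a + expTower k b) := (pow_add 2 _ _).symm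
      _ ≤ 2 ^ expTower k (a + b) := Nat.pow_le_pow_right two_pos ih

theorem expTower_pow_le {k : ℕ} (hk : 2 ≤ k) (a c : ℕ) :
    expTower k a ^ c ≤ expTower k (a + c) := by
  obtain ⟨k, rfl⟩ : ∃ m, k = m + 2 := ⟨k - 2, by omega⟩
  show (2 ^ expTower (k + 1) a) ^ c ≤ 2 ^ expTower (k + 1) (a + c)
  rw [← pow_mul]
  refine Nat.pow_le_pow_right two_pos ?_
  calc 2 ^ expTower k a * c ≤ 2 ^ expTower k a * 2 ^ c :=
        Nat.mul_le_mul_left _ Nat.lt_two_pow_self.le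
    _ = 2 ^ (expTower k a + c) := (pow_add 2 _ _).symm
    _ ≤ 2 ^ expTower k (a + c) := Nat.pow_le_pow_right two_pos (expTower_add_le k a c)

theorem pow_three_le_two_pow_add_two (n : ℕ) : n ^ 3 ≤ 2 ^ (n + 2) := by
  rcases lt_or_ge n 4 with hn | hn
  · interval_cases n <;> norm_num
  · induction n, hn using Nat.le_induction with
    | base => norm_num
    | succ m hm ih =>
      calc (m + 1) ^ 3 ≤ 2 * m ^ 3 := by
            nlinarith [Nat.mul_le_mul_right (m * m) hm, Nat.mul_le_mul_right m hm]
        _ ≤ 2 * 2 ^ (m + 2) := Nat.mul_le_mul_left 2 ih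
        _ = 2 ^ (m + 1 + 2) := by ring

theorem cubic_bound_le_two_pow (D : ℕ) : 1 + D * (2 * D ^ 2 + D) ≤ 2 ^ (D + 4) := by
  have h := pow_three_le_two_pow_add_two D
  have hsq : D ^ 2 ≤ D ^ 3 := by rcases D with _ | D <;> simp [pow_succ]
  have h1 : 1 ≤ 2 ^ (D + 2) := Nat.one_le_two_pow
  have hexp : 2 ^ (D + 4) = 4 * 2 ^ (D + 2) := by ring
  have hcubic : D * (2 * D ^ 2 + D) = 2 * D ^ 3 + D ^ 2 := by ring
  omega


theorem add_pow_mul_le_add_pow_succ {a N : ℕ} (j : ℕ) (hN : 1 ≤ N) :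
    a + a ^ j * N ≤ (a + N) ^ (j + 1) := by
  have h1 : 1 ≤ (a + N) ^ j := Nat.one_le_pow _ _ (by omega)
  have h2 : a ^ j ≤ (a + N) ^ j := Nat.pow_le_pow_left (by omega) j
  rw [pow_succ, mul_add]
  exact Nat.add_le_add (Nat.le_mul_of_pos_left a h1) (Nat.mul_le_mul_right N h2)

theorem logStar_of_le_one {n : ℕ} (h : n ≤ 1) : logStar n = 0 := by
  rw [logStar, dif_pos h]

theorem logStar_of_one_lt {n : ℕ} (h : 1 < n) : logStar n = logStar (Nat.log 2 n) + 1 := by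
  rw [logStar, dif_neg h.not_ge]

theorem logStar_mono : Monotone logStar := by
  intro m n h
  induction n using Nat.strong_induction_on generalizing m with
  | _ n ih =>
    rcases le_or_gt m 1 with hm | hm
    · rw [logStar_of_le_one hm]
      exact Nat.zero_le _
    · rw [logStar_of_one_lt hm, logStar_of_one_lt (hm.trans_le h)]
      exact Nat.succ_le_succ (ih _ (Nat.log_lt_self 2 (by omega)) (Nat.log_mono_right h))

theorem logStar_two_pow_le (m : ℕ) : logStar (2 ^ m) ≤ logStar m + 1 := by
  rcases Nat.eq_zero_or_pos m with rfl | hm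
  · simp [logStar_of_le_one]
  · rw [logStar_of_one_lt (Nat.one_lt_two_pow hm.ne'), Nat.log_pow one_lt_two]

theorem logStar_expTower_le (k b : ℕ) : logStar (expTower k b) ≤ k + logStar b := by
  induction k with
  | zero => simp [expTower]
  | succ k ih => have := logStar_two_pow_le (expTower k b); simp only [expTower]; omega

theorem one_le_logStar {n : ℕ} (h : 2 ≤ n) : 1 ≤ logStar n := by
  rw [logStar_of_one_lt h]
  omega

theorem two_le_logStar {n : ℕ} (h : 4 ≤ n) : 2 ≤ logStar n := by
  rw [logStar_of_one_lt (by omega)]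
  have := one_le_logStar (Nat.le_log_of_pow_le one_lt_two (by omega : 2 ^ 2 ≤ n))
  omega

theorem logStar_le_of_le_expTower {n D b : ℕ} (hD : 1 ≤ D) (hn : n ≤ expTower D b)
    (hb : b ≤ 2 ^ (D + 4)) : logStar n ≤ D + logStar (logStar n) + 1 := by
  have hlog : logStar n ≤ D + (logStar (D + 4) + 1) :=
    calc logStar n ≤ D + logStar b := (logStar_mono hn).trans (logStar_expTower_le D b)
      _ ≤ D + (logStar (D + 4) + 1) :=
          Nat.add_le_add_left ((logStar_mono hb).trans (logStar_two_pow_le _)) D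
  rcases le_or_gt (D + 4) (logStar n) with h | h
  · have := logStar_mono h
    omega
  · have h2 : 2 ≤ logStar n → 1 ≤ logStar (logStar n) := one_le_logStar
    have h4 : 4 ≤ logStar n → 2 ≤ logStar (logStar n) := two_le_logStar
    omega

theorem eq_of_mem_of_altCount_cons_eq_zero :
    ∀ {a : Bool} {s : List Bool}, altCount (a :: s) = 0 → ∀ b ∈ s, b = a
  | _, [], _, b, hb => by simp at hb
  | a, c :: s, h, b, hb => by
    have h' : (if a = c then 0 else 1) + altCount (c :: s) = 0 := h
    obtain rfl : a = c := by
      by_contra hne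
      simp [hne] at h'
    rcases List.mem_cons.mp hb with rfl | hb
    · rfl
    · exact eq_of_mem_of_altCount_cons_eq_zero (by omega) b hb

namespace Fml

def OnlyQuant (c : Bool) : Fml → Prop
  | eq _ _ | rel _ _ => True
  | not φ => OnlyQuant c φ
  | and φ ψ | or φ ψ => OnlyQuant c φ ∧ OnlyQuant c ψ
  | all _ φ => c = false ∧ OnlyQuant c φ
  | ex _ φ => c = true ∧ OnlyQuant c φ

theorem qstrings_nonempty : ∀ φ : Fml, φ.qstrings.Nonempty
  | eq _ _ | rel _ _ => ⟨[], rfl⟩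
  | not φ => qstrings_nonempty φ
  | and φ _ | or φ _ => (qstrings_nonempty φ).mono Set.subset_union_left
  | all _ φ | ex _ φ => (qstrings_nonempty φ).image _

theorem onlyQuant_of_forall_mem_qstrings {c : Bool} :
    ∀ {φ : Fml}, (∀ s ∈ φ.qstrings, ∀ b ∈ s, b = c) → φ.OnlyQuant c
  | eq _ _, _ | rel _ _, _ => trivial
  | not φ, h => onlyQuant_of_forall_mem_qstrings (φ := φ) h
  | and _ _, h | or _ _, h =>
    ⟨onlyQuant_of_forall_mem_qstrings fun s hs => h s (Or.inl hs),
      onlyQuant_of_forall_mem_qstrings fun s hs => h s (Or.inr hs)⟩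
  | all _ φ, h | ex _ φ, h =>
    have ⟨s, hs⟩ := qstrings_nonempty φ
    ⟨(h _ ⟨s, hs, rfl⟩ _ List.mem_cons_self).symm,
      onlyQuant_of_forall_mem_qstrings fun s hs b hb =>
        h _ ⟨s, hs, rfl⟩ b (List.mem_cons_of_mem _ hb)⟩

theorem onlyQuant_of_altCount_cons {c : Bool} {φ : Fml}
    (h : ∀ s ∈ φ.qstrings, altCount (c :: s) ≤ 0) : φ.OnlyQuant c :=
  onlyQuant_of_forall_mem_qstrings fun s hs =>
    eq_of_mem_of_altCount_cons_eq_zero (Nat.le_zero.mp (h s hs))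

theorem IsAtomic.depth_eq_zero : ∀ {φ : Fml}, φ.IsAtomic → φ.depth = 0
  | eq _ _, _ | rel _ _, _ => rfl

theorem freeVars_nonempty_of_depth_eq_zero : ∀ {φ : Fml}, φ.depth = 0 → φ.freeVars.Nonempty
  | eq i _, _ | rel i _, _ => ⟨i, by simp [freeVars]⟩
  | not φ, h => freeVars_nonempty_of_depth_eq_zero (φ := φ) h
  | and φ _, h | or φ _, h =>
    (freeVars_nonempty_of_depth_eq_zero (Nat.max_eq_zero_iff.mp h).1).mono
      Finset.subset_union_left

theorem IsSentence.depth_pos {φ : Fml} (h : φ.IsSentence) : 0 < φ.depth := by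
  by_contra h0
  obtain ⟨a, ha⟩ := freeVars_nonempty_of_depth_eq_zero (Nat.eq_zero_of_not_pos h0)
  exact Finset.notMem_empty a (h ▸ ha)

theorem eval_iff_of_depth_eq_zero {V W : Type} {r : V → V → Prop} {r' : W → W → Prop}
    {σ : ℕ → V} {τ : ℕ → W} :
    ∀ {φ : Fml}, φ.depth = 0 →
      (∀ a ∈ φ.freeVars, ∀ b ∈ φ.freeVars,
        (σ a = σ b ↔ τ a = τ b) ∧ (r (σ a) (σ b) ↔ r' (τ a) (τ b))) →
      (φ.eval r σ ↔ φ.eval r' τ)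
  | eq i j, _, h => (h i (by simp [freeVars]) j (by simp [freeVars])).1
  | rel i j, _, h => (h i (by simp [freeVars]) j (by simp [freeVars])).2
  | not φ, hd, h => (eval_iff_of_depth_eq_zero (φ := φ) hd h).not
  | and φ ψ, hd, h =>
    and_congr
      (eval_iff_of_depth_eq_zero (Nat.max_eq_zero_iff.mp hd).1 fun a ha b hb =>
        h a (Finset.mem_union_left _ ha) b (Finset.mem_union_left _ hb))
      (eval_iff_of_depth_eq_zero (Nat.max_eq_zero_iff.mp hd).2 fun a ha b hb =>
        h a (Finset.mem_union_right _ ha) b (Finset.mem_union_right _ hb))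
  | or φ ψ, hd, h =>
    or_congr
      (eval_iff_of_depth_eq_zero (Nat.max_eq_zero_iff.mp hd).1 fun a ha b hb =>
        h a (Finset.mem_union_left _ ha) b (Finset.mem_union_left _ hb))
      (eval_iff_of_depth_eq_zero (Nat.max_eq_zero_iff.mp hd).2 fun a ha b hb =>
        h a (Finset.mem_union_right _ ha) b (Finset.mem_union_right _ hb))

theorem eval_iff_of_embedding_of_depth_eq_zero {V W : Type} {G : SimpleGraph V}
    {H : SimpleGraph W} (f : H ↪g G) {φ : Fml} (hd : φ.depth = 0) {σ : ℕ → V} {τ : ℕ → W}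
    (hστ : ∀ a ∈ φ.freeVars, σ a = f (τ a)) : φ.eval G.Adj σ ↔ φ.eval H.Adj τ := by
  refine eval_iff_of_depth_eq_zero hd fun a ha b hb => ?_
  rw [hστ a ha, hστ b hb, f.injective.eq_iff, f.map_adj_iff]
  exact ⟨Iff.rfl, Iff.rfl⟩

theorem eval_of_onlyQuant_false {V W : Type} {G : SimpleGraph V} {H : SimpleGraph W}
    (f : H ↪g G) {φ : Fml} (hq : φ.OnlyQuant false) (hn : φ.NegAtomic) {σ : ℕ → V}
    {τ : ℕ → W} (hστ : ∀ a ∈ φ.freeVars, σ a = f (τ a)) (hev : φ.eval G.Adj σ) :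
    φ.eval H.Adj τ := by
  induction φ generalizing σ τ with
  | eq _ _ | rel _ _ => exact (eval_iff_of_embedding_of_depth_eq_zero f rfl hστ).1 hev
  | not ψ _ =>
    exact (eval_iff_of_embedding_of_depth_eq_zero f (φ := ψ.not)
      (IsAtomic.depth_eq_zero (φ := ψ) hn) hστ).1 hev
  | and ψ χ ihψ ihχ =>
    exact ⟨ihψ hq.1 hn.1 (fun a ha => hστ a (Finset.mem_union_left _ ha)) hev.1,
      ihχ hq.2 hn.2 (fun a ha => hστ a (Finset.mem_union_right _ ha)) hev.2⟩
  | or ψ χ ihψ ihχ =>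
    exact hev.imp (ihψ hq.1 hn.1 fun a ha => hστ a (Finset.mem_union_left _ ha))
      (ihχ hq.2 hn.2 fun a ha => hστ a (Finset.mem_union_right _ ha))
  | ex _ _ _ => exact absurd hq.1 (by decide)
  | all i ψ ih =>
    intro w
    refine ih hq.2 hn (fun a ha => ?_) (hev (f w))
    by_cases hai : a = i
    · subst hai
      simp
    · simp [hai, hστ a (Finset.mem_erase.mpr ⟨hai, ha⟩)]

end Fml

open Fml

theorem exists_snoc_of_update {α β : Type*} {s : Finset ℕ} {i j : ℕ} {σ : ℕ → α} {τ : ℕ → β}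
    {x : Fin j → α} {y : Fin j → β} (h : ∀ a ∈ s.erase i, ∃ b, σ a = x b ∧ τ a = y b)
    (v : α) (w : β) :
    ∀ a ∈ s, ∃ b, Function.update σ i v a = (Fin.snoc x v : Fin (j + 1) → α) b ∧
      Function.update τ i w a = (Fin.snoc y w : Fin (j + 1) → β) b := by
  intro a ha
  by_cases hai : a = i
  · subst hai
    exact ⟨Fin.last j, by simp⟩
  · obtain ⟨b, hσ, hτ⟩ := h a (Finset.mem_erase.mpr ⟨hai, ha⟩)
    exact ⟨b.castSucc, by simp [hai, hσ, hτ]⟩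

/-- `Tp k l` encodes the rank-`k` types of `l`-tuples: at rank `0` the atomic diagram, at rank
`k + 1` the set of rank-`k` types of the one-point extensions. -/
abbrev Tp : ℕ → ℕ → Type
  | 0, l => Fin l → Fin l → Prop × Prop
  | k + 1, l => Finset (Tp k (l + 1))

noncomputable instance Tp.instFintype : ∀ k l, Fintype (Tp k l)
  | 0, _ => inferInstance
  | k + 1, l => have := Tp.instFintype k (l + 1); inferInstance

theorem card_tp_le : ∀ k l, Fintype.card (Tp k l) ≤ expTower (k + 1) (2 * (k + l) ^ 2)
  | 0, l => by simp [expTower, pow_mul, sq]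
  | k + 1, l => by
    rw [Fintype.card_finset]
    refine Nat.pow_le_pow_right two_pos ((card_tp_le k (l + 1)).trans_eq ?_)
    ring_nf

section Graph

variable {V : Type} [Fintype V] (G : SimpleGraph V)

open Classical in
noncomputable def tp : (k : ℕ) → {l : ℕ} → (Fin l → V) → Tp k l
  | 0, _, x => fun a b => (x a = x b, G.Adj (x a) (x b))
  | k + 1, _, x => Finset.univ.image fun v => tp k (Fin.snoc x v)

variable {G}

theorem mem_tp_succ {k l : ℕ} {x : Fin l → V} {t : Tp k (l + 1)} :
    t ∈ tp G (k + 1) x ↔ ∃ v, tp G k (Fin.snoc x v) = t := by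
  simp [tp]

theorem tp_zero_eq_of_tp_eq [Nonempty V] :
    ∀ {k l : ℕ} {x y : Fin l → V}, tp G k x = tp G k y → tp G 0 x = tp G 0 y
  | 0, _, _, _, h => h
  | k + 1, _, x, y, h => by
    obtain ⟨v⟩ := ‹Nonempty V›
    have hx : tp G k (Fin.snoc x v) ∈ tp G (k + 1) y := h ▸ mem_tp_succ.mpr ⟨v, rfl⟩
    obtain ⟨w, hw⟩ := mem_tp_succ.mp hx
    have h0 := tp_zero_eq_of_tp_eq hw
    funext a b
    simpa [tp] using (congrFun (congrFun h0 a.castSucc) b.castSucc).symm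

theorem diagram_of_tp_zero_eq {l : ℕ} {x y : Fin l → V} (h : tp G 0 x = tp G 0 y)
    (a b : Fin l) :
    (x a = x b ↔ y a = y b) ∧ (G.Adj (x a) (x b) ↔ G.Adj (y a) (y b)) := by
  have hab := congrFun (congrFun h a) b
  simp only [tp, Prod.mk.injEq] at hab
  exact ⟨Iff.of_eq hab.1, Iff.of_eq hab.2⟩

theorem eval_induce_iff_of_tp_eq [Nonempty V] {S : Set V} {k j : ℕ} {x y : Fin j → V}
    (htp : tp G k x = tp G k y) {φ : Fml} (hd : φ.depth = 0) {σ : ℕ → V} {τ : ℕ → S}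
    (hστ : ∀ a ∈ φ.freeVars, ∃ b, σ a = x b ∧ (τ a : V) = y b) :
    φ.eval G.Adj σ ↔ φ.eval (G.induce S).Adj τ := by
  refine eval_iff_of_depth_eq_zero hd fun a ha b hb => ?_
  obtain ⟨p, hσp, hτp⟩ := hστ a ha
  obtain ⟨q, hσq, hτq⟩ := hστ b hb
  rw [SimpleGraph.induce_adj, Subtype.ext_iff, hσp, hσq, hτp, hτq]
  exact diagram_of_tp_zero_eq (tp_zero_eq_of_tp_eq htp) p q

variable (G) [Nonempty V] [DecidableEq V]

noncomputable def extensionWitness {k j : ℕ} (y : Fin j → V) (t : Tp k (j + 1)) : V :=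
  Classical.epsilon fun w => tp G k (Fin.snoc y w) = t

noncomputable def witnessSet (D : ℕ) : ℕ → Finset V
  | 0 => ∅
  | j + 1 => witnessSet D j ∪ Finset.univ.image
      fun p : (Fin j → witnessSet D j) × Tp (D - (j + 1)) (j + 1) =>
        extensionWitness G (fun i => (p.1 i : V)) p.2

variable {G}

theorem witnessSet_mono (D : ℕ) : Monotone (witnessSet G D) :=
  monotone_nat_of_le_succ fun _ => Finset.subset_union_left

theorem exists_mem_witnessSet_succ {D j : ℕ} {y : Fin j → V} (hy : ∀ i, y i ∈ witnessSet G D j)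
    (v : V) : ∃ w ∈ witnessSet G D (j + 1),
      tp G (D - (j + 1)) (Fin.snoc y w) = tp G (D - (j + 1)) (Fin.snoc y v) := by
  refine ⟨_, Finset.mem_union_right _ (Finset.mem_image_of_mem _
    (Finset.mem_univ ((fun i => ⟨y i, hy i⟩), tp G (D - (j + 1)) (Fin.snoc y v)))), ?_⟩
  exact Classical.epsilon_spec (p := fun w => tp G _ (Fin.snoc y w) = _) ⟨v, rfl⟩

theorem witnessSet_nonempty {D : ℕ} (hD : 1 ≤ D) : (witnessSet G D D).Nonempty := by
  obtain ⟨w, hw, -⟩ := exists_mem_witnessSet_succ (G := G) (D := D) (y := Fin.elim0)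
    (fun i => i.elim0) (Classical.arbitrary V)
  exact ⟨w, witnessSet_mono D hD hw⟩

theorem card_witnessSet_succ_le (D j : ℕ) :
    (witnessSet G D (j + 1)).card ≤ (witnessSet G D j).card +
      (witnessSet G D j).card ^ j * Fintype.card (Tp (D - (j + 1)) (j + 1)) := by
  refine (Finset.card_union_le _ _).trans (Nat.add_le_add_left ?_ _)
  refine Finset.card_image_le.trans ?_
  simp

theorem card_witnessSet_le (D : ℕ) :
    ∀ j ≤ D, (witnessSet G D j).card ≤ expTower D (1 + j * (2 * D ^ 2 + D))
  | 0, _ => by simp [witnessSet]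
  | j + 1, hj => by
    set a := (witnessSet G D j).card
    set N := Fintype.card (Tp (D - (j + 1)) (j + 1))
    have hN : N ≤ expTower D (2 * D ^ 2) := by
      have h := card_tp_le (D - (j + 1)) (j + 1)
      rw [show D - (j + 1) + (j + 1) = D by omega] at h
      exact h.trans (expTower_le_expTower_of_le _ (by omega))
    have hN1 : 1 ≤ N := Fintype.card_pos_iff.mpr ⟨tp G _ fun _ => Classical.arbitrary V⟩
    have hsum : a + N ≤ expTower D (1 + j * (2 * D ^ 2 + D) + 2 * D ^ 2) :=
      (Nat.add_le_add (card_witnessSet_le D j (by omega)) hN).trans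
        (expTower_add_expTower_le D (by omega) (by nlinarith))
    have hpow :
        (a + N) ^ (j + 1) ≤ expTower D (1 + j * (2 * D ^ 2 + D) + 2 * D ^ 2 + (j + 1)) := by
      -- the tower absorbs the power only from height `2` on, which `0 < j < D` provides
      rcases Nat.eq_zero_or_pos j with rfl | hj0
      · simpa using hsum.trans (expTower_mono D (by omega))
      · exact (Nat.pow_le_pow_left hsum _).trans (expTower_pow_le (by omega) _ _)
    calc (witnessSet G D (j + 1)).card ≤ a + a ^ j * N := card_witnessSet_succ_le D j
      _ ≤ (a + N) ^ (j + 1) := add_pow_mul_le_add_pow_succ j hN1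
      _ ≤ _ := hpow
      _ ≤ expTower D (1 + (j + 1) * (2 * D ^ 2 + D)) := expTower_mono D (by nlinarith)

theorem eval_induce_witnessSet_of_onlyQuant_true {D : ℕ} {φ : Fml} (hq : φ.OnlyQuant true)
    (hn : φ.NegAtomic) {j : ℕ} (hd : φ.depth + j ≤ D) {x y : Fin j → V}
    (hy : ∀ i, y i ∈ witnessSet G D j) (htp : tp G (D - j) x = tp G (D - j) y)
    {σ : ℕ → V} {τ : ℕ → (witnessSet G D D : Set V)}
    (hστ : ∀ a ∈ φ.freeVars, ∃ b, σ a = x b ∧ (τ a : V) = y b) (hev : φ.eval G.Adj σ) :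
    φ.eval (G.induce (witnessSet G D D : Set V)).Adj τ := by
  induction φ generalizing j σ τ with
  | eq _ _ | rel _ _ => exact (eval_induce_iff_of_tp_eq htp rfl hστ).1 hev
  | not ψ _ =>
    exact (eval_induce_iff_of_tp_eq htp (φ := ψ.not) (IsAtomic.depth_eq_zero (φ := ψ) hn)
      hστ).1 hev
  | and ψ χ ihψ ihχ =>
    simp only [depth] at hd
    exact ⟨ihψ hq.1 hn.1 (by omega) hy htp
        (fun a ha => hστ a (Finset.mem_union_left _ ha)) hev.1,
      ihχ hq.2 hn.2 (by omega) hy htp (fun a ha => hστ a (Finset.mem_union_right _ ha)) hev.2⟩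
  | or ψ χ ihψ ihχ =>
    simp only [depth] at hd
    exact hev.imp
      (ihψ hq.1 hn.1 (by omega) hy htp fun a ha => hστ a (Finset.mem_union_left _ ha))
      (ihχ hq.2 hn.2 (by omega) hy htp fun a ha => hστ a (Finset.mem_union_right _ ha))
  | all _ _ _ => exact absurd hq.1 (by decide)
  | ex i ψ ih =>
    simp only [depth] at hd
    obtain ⟨v, hv⟩ := hev
    rw [show D - j = D - (j + 1) + 1 by omega] at htp
    -- `y` has the type of `x`, so some `u` extends `y` as `v` extends `x`, and the witness set
    -- holds an extension `w` of `y` of the same type as `u`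
    have hx : tp G _ (Fin.snoc x v) ∈ tp G (D - (j + 1) + 1) y := htp ▸ mem_tp_succ.mpr ⟨v, rfl⟩
    obtain ⟨u, hu⟩ := mem_tp_succ.mp hx
    obtain ⟨w, hw, hwu⟩ := exists_mem_witnessSet_succ hy u
    have hwS : w ∈ (witnessSet G D D : Set V) := witnessSet_mono D (by omega) hw
    have hy' : ∀ b, (Fin.snoc y w : Fin (j + 1) → V) b ∈ witnessSet G D (j + 1) :=
      Fin.lastCases (by simpa using hw)
        fun b => by simpa using witnessSet_mono D j.le_succ (hy b)
    have hστ' : ∀ a ∈ ψ.freeVars, ∃ b,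
        Function.update σ i v a = Fin.snoc (α := fun _ => V) x v b ∧
        (Function.update τ i ⟨w, hwS⟩ a : V) = Fin.snoc (α := fun _ => V) y w b := by
      have hcoe (a : ℕ) : (Function.update τ i ⟨w, hwS⟩ a : V) =
          Function.update (fun a => (τ a : V)) i w a :=
        Function.apply_update (fun _ => Subtype.val) τ i _ a
      simpa only [hcoe] using exists_snoc_of_update (τ := fun a => (τ a : V)) hστ v w
    exact ⟨⟨w, hwS⟩, ih hq.2 hn (by omega) hy' (hwu.trans hu).symm hστ' hv⟩

theorem eval_induce_witnessSet_of_zeroAlt {D : ℕ} {φ : Fml} (hφ : φ.ZeroAlt)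
    (hs : φ.IsSentence) (hd : φ.depth ≤ D) (σ : ℕ → V) (τ : ℕ → (witnessSet G D D : Set V))
    (hev : φ.eval G.Adj σ) : φ.eval (G.induce (witnessSet G D D : Set V)).Adj τ := by
  induction φ with
  | eq _ _ | rel _ _ => exact absurd hs.depth_pos (lt_irrefl 0)
  | not ψ _ =>
    exact absurd (IsAtomic.depth_eq_zero (φ := ψ) hφ.1) hs.depth_pos.ne'
  | and ψ χ ihψ ihχ =>
    obtain ⟨hsψ, hsχ⟩ := Finset.union_eq_empty.mp hs
    exact ⟨ihψ ⟨hφ.1.1, fun s h => hφ.2 s (Or.inl h)⟩ hsψ ((le_max_left _ _).trans hd) hev.1,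
      ihχ ⟨hφ.1.2, fun s h => hφ.2 s (Or.inr h)⟩ hsχ ((le_max_right _ _).trans hd) hev.2⟩
  | or ψ χ ihψ ihχ =>
    obtain ⟨hsψ, hsχ⟩ := Finset.union_eq_empty.mp hs
    exact hev.imp
      (ihψ ⟨hφ.1.1, fun s h => hφ.2 s (Or.inl h)⟩ hsψ ((le_max_left _ _).trans hd))
      (ihχ ⟨hφ.1.2, fun s h => hφ.2 s (Or.inr h)⟩ hsχ ((le_max_right _ _).trans hd))
  | ex i ψ _ =>
    exact eval_induce_witnessSet_of_onlyQuant_true (φ := ex i ψ)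
      ⟨rfl, onlyQuant_of_altCount_cons fun s hs => hφ.2 _ ⟨s, hs, rfl⟩⟩ hφ.1 hd
      (x := Fin.elim0) (y := Fin.elim0) (fun i => i.elim0) rfl
      (fun a ha => (Finset.notMem_empty a (hs ▸ ha)).elim) hev
  | all i ψ _ =>
    exact eval_of_onlyQuant_false (SimpleGraph.Embedding.induce _) (φ := all i ψ)
      ⟨rfl, onlyQuant_of_altCount_cons fun s hs => hφ.2 _ ⟨s, hs, rfl⟩⟩ hφ.1
      (fun a ha => (Finset.notMem_empty a (hs ▸ ha)).elim) hev

end Graph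

theorem statement_1 {V : Type} [Fintype V] [Nonempty V] (G : SimpleGraph V)
    (φ : Fml) (hφ : φ.ZeroAlt) (hdef : Defines G φ) :
    logStar (Fintype.card V) ≤ φ.depth + logStar (logStar (Fintype.card V)) + 1 := by
  classical
  obtain ⟨hsent, hG, hdefines⟩ := hdef
  set D := φ.depth
  set S : Finset V := witnessSet G D D
  have hD : 1 ≤ D := hsent.depth_pos
  have hS : GModels (G.induce (S : Set V)) φ := fun τ =>
    eval_induce_witnessSet_of_zeroAlt hφ hsent le_rfl _ τ (hG fun _ => Classical.arbitrary V)
  have : Nonempty (S : Set V) := (witnessSet_nonempty hD).coe_sort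
  obtain ⟨e⟩ : Nonempty (G ≃g G.induce (S : Set V)) :=
    by_contra fun h => hdefines _ inferInstance inferInstance _ h hS
  have hcard : Fintype.card V ≤ expTower D (1 + D * (2 * D ^ 2 + D)) :=
    calc Fintype.card V = Fintype.card (S : Set V) := Fintype.card_congr e.toEquiv
      _ = S.card := by simp
      _ ≤ _ := card_witnessSet_le D D le_rfl
  exact logStar_le_of_le_expTower hD hcard (cubic_bound_le_two_pow D)

end PaperFO
end

section
/- Let G be a graph and let G' be the digraph obtained from G by replacing each edge {x,y} of G by the pair of arcs (x,y) and (y,x). Then D_0(G') ≤ max(2, D_0(G)), where D_0(G) is computed in the first-order language of graphs and D_0(G') in the first-order language of digraphs. -/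
namespace PaperFO

/-- A sentence is true on the digraph `(V, r)` (digraphs interpret `Fml.rel`
as the arc relation `↦`). -/
def DModels {V : Type} (r : V → V → Prop) (φ : Fml) : Prop :=
  ∀ σ : ℕ → V, φ.eval r σ

/-- Isomorphism of digraphs. -/
def DIso {V W : Type} (r : V → V → Prop) (r' : W → W → Prop) : Prop :=
  ∃ e : V ≃ W, ∀ a b : V, r a b ↔ r' (e a) (e b)

/-- The sentence `φ` defines the digraph `(V, r)`: it is a sentence, it is
true on `(V, r)`, and it fails on every (finite, nonempty) digraph not
isomorphic to `(V, r)`. -/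
def DDefines {V : Type} (r : V → V → Prop) (φ : Fml) : Prop :=
  φ.IsSentence ∧ DModels r φ ∧
    ∀ (W : Type) (_ : Fintype W) (_ : Nonempty W) (r' : W → W → Prop),
      ¬ DIso r r' → ¬ DModels r' φ

end PaperFO


namespace PaperFO

namespace Fml

def graphAxioms : Fml :=
  .and (.all 0 (.all 1 (.or (.not (.rel 0 1)) (.rel 1 0)))) (.all 0 (.not (.rel 0 0)))

theorem depth_graphAxioms : graphAxioms.depth = 2 := rfl

theorem isSentence_graphAxioms : graphAxioms.IsSentence := by
  unfold IsSentence
  decide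

theorem zeroAlt_graphAxioms : graphAxioms.ZeroAlt := by
  refine ⟨⟨⟨trivial, trivial⟩, trivial⟩, ?_⟩
  rintro s (h | h) <;>
    simp only [qstrings, Set.union_self, Set.image_singleton, Set.mem_singleton_iff] at h <;>
    subst h <;> decide

theorem eval_graphAxioms {V : Type} (r : V → V → Prop) (σ : ℕ → V) :
    graphAxioms.eval r σ ↔ Std.Symm r ∧ Std.Irrefl r := by
  simp only [graphAxioms, eval, Function.update_self, ne_eq, zero_ne_one, not_false_eq_true,
    Function.update_of_ne, or_iff_not_imp_left, not_not]
  exact ⟨fun ⟨hs, hi⟩ => ⟨⟨hs⟩, ⟨hi⟩⟩, fun ⟨⟨hs⟩, ⟨hi⟩⟩ => ⟨hs, hi⟩⟩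

theorem IsSentence.and {φ ψ : Fml} (hφ : φ.IsSentence) (hψ : ψ.IsSentence) :
    (φ.and ψ).IsSentence := by
  simp only [IsSentence, freeVars] at *
  rw [hφ, hψ, Finset.union_empty]

theorem ZeroAlt.and {φ ψ : Fml} (hφ : φ.ZeroAlt) (hψ : ψ.ZeroAlt) : (φ.and ψ).ZeroAlt :=
  ⟨⟨hφ.1, hψ.1⟩, fun s hs => hs.elim (hφ.2 s) (hψ.2 s)⟩

end Fml

theorem dIso_of_iso {V W : Type} {G : SimpleGraph V} {H : SimpleGraph W} (e : G ≃g H) :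
    DIso G.Adj H.Adj :=
  ⟨e.toEquiv, fun _ _ => e.map_adj_iff.symm⟩

/-- A digraph satisfying `graphAxioms` is the symmetric digraph of a graph `H`, and `φ` holds on
it exactly when it holds on `H`. -/
theorem Defines.dDefines_and_graphAxioms {V : Type} {G : SimpleGraph V} {φ : Fml}
    (hdef : Defines G φ) : DDefines G.Adj (φ.and .graphAxioms) := by
  obtain ⟨hsent, hmod, hneg⟩ := hdef
  refine ⟨hsent.and Fml.isSentence_graphAxioms,
    fun σ => ⟨hmod σ, (Fml.eval_graphAxioms _ σ).2 ⟨G.symm, G.loopless⟩⟩, ?_⟩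
  intro W _ _ r hniso hmodr
  obtain ⟨hsymm, hirrefl⟩ :=
    (Fml.eval_graphAxioms r fun _ => Classical.arbitrary W).1 (hmodr _).2
  let H : SimpleGraph W := ⟨r, hsymm, hirrefl⟩
  exact hneg W ‹_› ‹_› H (fun ⟨e⟩ => hniso (dIso_of_iso e)) fun σ => (hmodr σ).1

theorem statement_3_general {V : Type} (G : SimpleGraph V)
    (φ : Fml) (hφ : φ.ZeroAlt) (hdef : Defines G φ) :
    ∃ ψ : Fml, ψ.ZeroAlt ∧ DDefines (fun x y : V => G.Adj x y) ψ ∧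
      ψ.depth ≤ max 2 φ.depth :=
  ⟨φ.and .graphAxioms, hφ.and Fml.zeroAlt_graphAxioms, hdef.dDefines_and_graphAxioms,
    by rw [Fml.depth, Fml.depth_graphAxioms]; omega⟩

theorem statement_3 {V : Type} [Fintype V] [Nonempty V] (G : SimpleGraph V)
    (φ : Fml) (hφ : φ.ZeroAlt) (hdef : Defines G φ) :
    ∃ ψ : Fml, ψ.ZeroAlt ∧ DDefines (fun x y : V => G.Adj x y) ψ ∧
      ψ.depth ≤ max 2 φ.depth :=
  statement_3_general G φ hφ hdef

end PaperFO
end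

section
/- Every complement-connected graph G with at least 5 vertices has a vertex v such that the induced subgraph G − v (obtained by deleting v) is still complement-connected. -/
namespace PaperFO

variable {V : Type}

/-- The adjacency relation at decomposition depth `i`: distinct vertices
`x, y` lying in a common member `F` of the depth-`i` decomposition `Dec^i G`
are adjacent in `F` iff `{x,y} ∈^{i+1} E(G)`, i.e. iff `G.Adj x y ↔ Even i`. -/
def parityAdj (G : SimpleGraph V) (i : ℕ) (x y : V) : Prop :=
  x ≠ y ∧ (G.Adj x y ↔ Even i)

/-- `cellRel G i x y` says that `x` and `y` lie in the same member of the
depth-`i` decomposition `Dec^i G` of `G` (for a connected graph `G`); these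
vertex sets are the cells of the partition `P_i` of the paper. -/
def cellRel (G : SimpleGraph V) : ℕ → V → V → Prop
  | 0 => Relation.ReflTransGen (fun a b => parityAdj G 0 a b)
  | i + 1 => Relation.ReflTransGen (fun a b => cellRel G i a b ∧ parityAdj G (i + 1) a b)

/-- The member of `Dec^i G` containing the vertex `v`, as a graph: the
depth-`i` environment `env_i(v; G)` of `v`. -/
def envGraph (G : SimpleGraph V) (i : ℕ) (v : V) :
    SimpleGraph {u : V // cellRel G i v u} where
  Adj x y := parityAdj G i x.1 y.1
  symm := ⟨fun x y h => ⟨h.1.symm, (G.adj_comm y.1 x.1).trans h.2⟩⟩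
  loopless := ⟨fun x h => h.1 rfl⟩

/-- The rank of a connected graph `G`: the smallest `k` such that the
partition `P_{k+1}` coincides with `P_k` (equivalently, such that `P_k`
consists of the vertex sets of the cocomponents of `G`). -/
noncomputable def rank (G : SimpleGraph V) : ℕ :=
  sInf {k : ℕ | ∀ x y : V, cellRel G (k + 1) x y ↔ cellRel G k x y}

/-- A connected graph `G` of rank `k` is uniform if `Dec^{k-1} G` contains no
complement-connected graph, i.e. every depth-`(k-1)` cell splits further;
every complement-connected graph (rank `0`) is uniform. -/
def Uniform (G : SimpleGraph V) : Prop :=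
  rank G = 0 ∨
    ∀ x : V, ∃ y : V, cellRel G (rank G - 1) x y ∧ ¬ cellRel G (rank G) x y

/-- A connected graph `G` of rank `k` is inclusion-free if for every
`0 ≤ i ≤ k`: (1) for any `K ∈ Dec^i G`, no two distinct connected components
of the complement of `K` are isomorphic; (2) no member of `Dec^i G` is
properly embeddable into another (embeddable implies isomorphic). -/
def InclusionFree (G : SimpleGraph V) : Prop :=
  ∀ i ≤ rank G,
    (∀ x y : V, cellRel G i x y → ¬ cellRel G (i + 1) x y →
      ¬ Nonempty (envGraph G (i + 1) x ≃g envGraph G (i + 1) y)) ∧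
    (∀ x y : V, Nonempty (envGraph G i x ↪g envGraph G i y) →
      Nonempty (envGraph G i x ≃g envGraph G i y))

/-- A graph is complement-connected if both it and its complement are
connected (in particular its vertex set is nonempty). -/
def CoConnected (G : SimpleGraph V) : Prop := G.Connected ∧ (Gᶜ).Connected

/-- A cocomponent of `G`: an inclusion-maximal complement-connected induced
subgraph of `G`, given by its vertex set `S`. -/
def IsCocomponent (G : SimpleGraph V) (S : Set V) : Prop :=
  CoConnected (G.induce S) ∧
    ∀ T : Set V, S ⊆ T → CoConnected (G.induce T) → T = S

end PaperFO

/-!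
If `G − v` is not complement-connected, then `v` is a cut vertex of `G` or of `Gᶜ`. Suppose
`G − u` is connected but `Gᶜ − u` is not. Then `G − u` is the join of two nonempty vertex sets
`X` and `Y`, and deleting a vertex `a` keeps `G` connected unless `a` is the chosen neighbour `w`
of `u` or the only vertex of `X` or of `Y`; with at least four vertices at most one side is a
singleton, so `G` has at most two cut vertices. Every finite connected graph has a vertex whose
deletion keeps it connected; for `G` co-connected such a vertex is a `u` as above, both for `G`
and for `Gᶜ`. Hence `G − v` fails to be complement-connected for at most four vertices `v`.
-/

namespace PaperFO

open SimpleGraph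

variable {V : Type} {G : SimpleGraph V}

lemma induce_compl (G : SimpleGraph V) (s : Set V) : Gᶜ.induce s = (G.induce s)ᶜ := by
  ext ⟨x, hx⟩ ⟨y, hy⟩
  simp [Subtype.ext_iff]

lemma coConnected_induce_iff (s : Set V) :
    CoConnected (G.induce s) ↔ (G.induce s).Connected ∧ (Gᶜ.induce s).Connected := by
  rw [CoConnected, induce_compl]

def cutVertices (G : SimpleGraph V) : Set V := {v | ¬ (G.induce {v}ᶜ).Connected}

lemma exists_join_of_not_connected_compl_induce {s : Set V} (hs : s.Nonempty)
    (h : ¬ (Gᶜ.induce s).Connected) :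
    ∃ X ⊆ s, X.Nonempty ∧ (s \ X).Nonempty ∧ ∀ x ∈ X, ∀ y ∈ s \ X, G.Adj x y := by
  have : Nonempty s := hs.to_subtype
  obtain ⟨a, b, hab⟩ : ∃ a b : s, ¬ (Gᶜ.induce s).Reachable a b := by
    by_contra! h'
    exact h ⟨h'⟩
  refine ⟨{x | ∃ hx : x ∈ s, (Gᶜ.induce s).Reachable a ⟨x, hx⟩}, fun x hx => hx.1,
    ⟨a, a.2, .rfl⟩, ⟨b, b.2, fun ⟨_, hb⟩ => hab hb⟩, ?_⟩
  rintro x ⟨hx, hax⟩ y ⟨hy, hay⟩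
  have hadj := ((Gᶜ.induce s).reachable_or_compl_adj ⟨x, hx⟩ ⟨y, hy⟩).resolve_left
    fun hxy => hay ⟨hy, hax.trans hxy⟩
  rw [← induce_compl, compl_compl] at hadj
  exact hadj

lemma connected_induce_compl_singleton_of_join {u a w x y : V} {X Y : Set V}
    (hcover : ∀ v, v ≠ u → v ∈ X ∨ v ∈ Y) (hjoin : ∀ x ∈ X, ∀ y ∈ Y, G.Adj x y)
    (huw : G.Adj u w) (hwa : w ≠ a) (hx : x ∈ X) (hxa : x ≠ a) (hy : y ∈ Y) (hya : y ≠ a) :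
    (G.induce {a}ᶜ).Connected := by
  let H := G.induce {a}ᶜ
  have reachable_x : ∀ v (hva : v ≠ a), v ≠ u → H.Reachable ⟨v, hva⟩ ⟨x, hxa⟩ := by
    intro v hva hvu
    rcases hcover v hvu with hvX | hvY
    · have hvy : H.Adj ⟨v, hva⟩ ⟨y, hya⟩ := hjoin v hvX y hy
      have hyx : H.Adj ⟨y, hya⟩ ⟨x, hxa⟩ := (hjoin x hx y hy).symm
      exact hvy.reachable.trans hyx.reachable
    · have hvx : H.Adj ⟨v, hva⟩ ⟨x, hxa⟩ := (hjoin x hx v hvY).symm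
      exact hvx.reachable
  rw [connected_iff_exists_forall_reachable]
  refine ⟨⟨x, hxa⟩, fun ⟨v, hva⟩ => Reachable.symm ?_⟩
  obtain rfl | hvu := eq_or_ne v u
  · have hvw : H.Adj ⟨v, hva⟩ ⟨w, hwa⟩ := huw
    exact hvw.reachable.trans (reachable_x w hwa huw.ne')
  · exact reachable_x v hva hvu

lemma cutVertices_subset_pair_of_join {u w y : V} {X Y : Set V}
    (hcover : ∀ v, v ≠ u → v ∈ X ∨ v ∈ Y) (hjoin : ∀ x ∈ X, ∀ y ∈ Y, G.Adj x y)
    (huw : G.Adj u w) (hX : X.Nontrivial) (hy : y ∈ Y) :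
    cutVertices G ⊆ {w, y} := by
  intro a ha
  by_contra hne
  simp only [Set.mem_insert_iff, Set.mem_singleton_iff, not_or] at hne
  obtain ⟨x, hx, hxa⟩ := hX.exists_ne a
  exact ha (connected_induce_compl_singleton_of_join hcover hjoin huw (Ne.symm hne.1) hx hxa hy
    (Ne.symm hne.2))

lemma ncard_cutVertices_le_two [Fintype V] (hG : G.Connected) (h4 : 4 ≤ Fintype.card V)
    {u : V} (hu : ¬ (Gᶜ.induce {u}ᶜ).Connected) : (cutVertices G).ncard ≤ 2 := by
  classical
  have : Nontrivial V := Fintype.one_lt_card_iff_nontrivial.mp (by omega)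
  obtain ⟨w, huw⟩ := hG.preconnected.exists_adj_of_nontrivial u
  obtain ⟨X, -, ⟨x, hx⟩, ⟨y, hy⟩, hjoin⟩ :=
    exists_join_of_not_connected_compl_induce (Set.nonempty_compl_of_nontrivial u) hu
  set Y := {u}ᶜ \ X
  have hcover : ∀ v, v ≠ u → v ∈ X ∨ v ∈ Y := fun v hvu => by
    by_cases hvX : v ∈ X
    · exact .inl hvX
    · exact .inr ⟨hvu, hvX⟩
  have hside : X.Nontrivial ∨ Y.Nontrivial := by
    by_contra! hsub
    have huniv : (Finset.univ : Finset V) ⊆ {u, x, y} := fun v _ => by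
      simp only [Finset.mem_insert, Finset.mem_singleton]
      rcases eq_or_ne v u with hvu | hvu
      · exact .inl hvu
      rcases hcover v hvu with hvX | hvY
      · exact .inr (.inl (hsub.1 hvX hx))
      · exact .inr (.inr (hsub.2 hvY hy))
    have := (Finset.card_le_card huniv).trans Finset.card_le_three
    rw [Finset.card_univ] at this
    omega
  have hpair : ∀ a b : V, ({a, b} : Set V).ncard ≤ 2 := fun a b =>
    (Set.ncard_insert_le a {b}).trans (by rw [Set.ncard_singleton])
  rcases hside with hX | hY
  · exact (Set.ncard_le_ncard (cutVertices_subset_pair_of_join hcover hjoin huw hX hy)).trans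
      (hpair w y)
  · exact (Set.ncard_le_ncard (cutVertices_subset_pair_of_join (fun v hv => (hcover v hv).symm)
      (fun y hy x hx => (hjoin x hx y hy).symm) huw hY hx)).trans (hpair w x)

theorem statement_5 {V : Type} [Fintype V] (G : SimpleGraph V)
    (hcc : CoConnected G) (h5 : 5 ≤ Fintype.card V) :
    ∃ v : V, CoConnected (G.induce {u : V | u ≠ v}) := by
  obtain ⟨hG, hGc⟩ := hcc
  have : Nontrivial V := Fintype.one_lt_card_iff_nontrivial.mp (by omega)
  by_contra! hbad
  simp only [← Set.compl_singleton_eq, coConnected_induce_iff, not_and_or] at hbad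
  obtain ⟨v₁, hv₁⟩ := hG.exists_connected_induce_compl_singleton_of_finite_nontrivial
  obtain ⟨v₂, hv₂⟩ := hGc.exists_connected_induce_compl_singleton_of_finite_nontrivial
  have hcutG := ncard_cutVertices_le_two hG (by omega) ((hbad v₁).resolve_left (not_not.2 hv₁))
  have hcutGc := ncard_cutVertices_le_two hGc (by omega)
    (by rw [compl_compl]; exact (hbad v₂).resolve_right (not_not.2 hv₂))
  have hcover : Set.univ ⊆ cutVertices G ∪ cutVertices Gᶜ := fun v _ => hbad v
  have := (Set.ncard_le_ncard hcover).trans (Set.ncard_union_le _ _)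
  rw [Set.ncard_univ, Nat.card_eq_fintype_card] at this
  omega

end PaperFO
end

section
/- Let A_1, …, A_r be connected graphs such that for all i ≠ j the graph A_i is not embeddable into A_j (in particular, they are pairwise non-isomorphic). Let S and T be nonempty subsets of {1, …, r} with S not a subset of T. Then the complement of the disjoint union ⨆_{i∈S} A_i is not embeddable into the complement of the disjoint union ⨆_{i∈T} A_i. -/
namespace PaperFO

/-- The disjoint union of an indexed family of graphs. -/
def sigmaGraph {ι : Type} {Vv : ι → Type} (A : ∀ a : ι, SimpleGraph (Vv a)) :
    SimpleGraph (Σ a : ι, Vv a) where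
  Adj p q := ∃ h : p.1 = q.1, (A q.1).Adj (h ▸ p.2) q.2
  symm := by
    constructor
    rintro ⟨a, x⟩ ⟨b, y⟩ ⟨h, hadj⟩
    cases h
    exact ⟨rfl, hadj.symm⟩
  loopless := by
    constructor
    rintro ⟨a, x⟩ ⟨h, hadj⟩
    exact (A a).irrefl hadj

/-- `Gcon A S` is the complement of the vertex-disjoint union of the graphs
`A a` for `a ∈ S` (the graph `G_{i,S}` of the paper). -/
def Gcon {ι : Type} {Vv : ι → Type} (A : ∀ a : ι, SimpleGraph (Vv a)) (S : Set ι) :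
    SimpleGraph {p : Σ a : ι, Vv a | p.1 ∈ S} :=
  ((sigmaGraph A).induce {p : Σ a : ι, Vv a | p.1 ∈ S})ᶜ

end PaperFO

/-!
Complementation does not change which maps are embeddings, so an embedding of complements is an
embedding of the disjoint unions themselves. Pick `i ∈ S \ T`. The connected graph `A i` is sent
into a single summand `A j` of the union over `T`, which gives an embedding `A i ↪g A j` with
`j ∈ T`, hence `j ≠ i`, contradicting the hypothesis.
-/

def SimpleGraph.Embedding.codRestrict {V W : Type*} {G : SimpleGraph V} {H : SimpleGraph W}
    (f : G ↪g H) (s : Set W) (hs : ∀ x, f x ∈ s) : G ↪g H.induce s where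
  toFun x := ⟨f x, hs x⟩
  inj' _ _ h := f.injective (congrArg Subtype.val h)
  map_rel_iff' := f.map_adj_iff

namespace PaperFO

open SimpleGraph

variable {ι : Type} {Vv : ι → Type} (A : ∀ a, SimpleGraph (Vv a))

@[simp]
lemma sigmaGraph_adj_mk {a : ι} {x y : Vv a} :
    (sigmaGraph A).Adj ⟨a, x⟩ ⟨a, y⟩ ↔ (A a).Adj x y :=
  ⟨fun ⟨_, h⟩ => h, fun h => ⟨rfl, h⟩⟩

lemma sigmaGraph_reachable_fst_eq {p q : Σ a, Vv a} (h : (sigmaGraph A).Reachable p q) :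
    p.1 = q.1 := by
  obtain ⟨w⟩ := h
  induction w with
  | nil => rfl
  | cons hadj _ ih => exact hadj.1.trans ih

def sigmaGraphIncl (a : ι) : A a ↪g sigmaGraph A where
  toFun x := ⟨a, x⟩
  inj' := sigma_mk_injective
  map_rel_iff' := sigmaGraph_adj_mk A

lemma sigma_mk_rec_fst (p : Σ a, Vv a) {c : ι} (h : p.1 = c) :
    (⟨c, h ▸ p.2⟩ : Σ a, Vv a) = p := by
  subst h
  rfl

variable {V : Type*} {G : SimpleGraph V}

def Embedding.toSummand (φ : G ↪g sigmaGraph A) {j : ι} (h : ∀ x, (φ x).1 = j) : G ↪g A j where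
  toFun x := h x ▸ (φ x).2
  inj' x y hxy := φ.injective <| by
    rw [← sigma_mk_rec_fst (φ x) (h x), ← sigma_mk_rec_fst (φ y) (h y)]
    exact congrArg (Sigma.mk j) hxy
  map_rel_iff' {x y} := by
    change (A j).Adj (h x ▸ (φ x).2) (h y ▸ (φ y).2) ↔ _
    rw [← sigmaGraph_adj_mk A, sigma_mk_rec_fst, sigma_mk_rec_fst]
    exact φ.map_adj_iff

lemma exists_embedding_summand_of_connected (hG : G.Connected) (φ : G ↪g sigmaGraph A) :
    ∃ j, (∀ x, (φ x).1 = j) ∧ Nonempty (G ↪g A j) := by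
  obtain ⟨x₀⟩ := hG.nonempty
  have hfst : ∀ x, (φ x).1 = (φ x₀).1 := fun x =>
    sigmaGraph_reachable_fst_eq A ((hG x x₀).map φ.toHom)
  exact ⟨_, hfst, ⟨Embedding.toSummand A φ hfst⟩⟩

theorem statement_7_general {r : ℕ} {Vv : Fin r → Type} (A : ∀ a, SimpleGraph (Vv a))
    (hconn : ∀ a, (A a).Connected)
    (hemb : ∀ a b : Fin r, a ≠ b → ¬ Nonempty (A a ↪g A b))
    (S T : Finset (Fin r)) (hST : ¬ S ⊆ T) :
    ¬ Nonempty (Gcon A (S : Set (Fin r)) ↪g Gcon A (T : Set (Fin r))) := by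
  rintro ⟨f⟩
  obtain ⟨i, hiS, hiT⟩ := Finset.not_subset.mp hST
  let φ : A i ↪g sigmaGraph A :=
    (Embedding.induce _).comp <| (Embedding.complEquiv.symm f).comp <|
      (sigmaGraphIncl A i).codRestrict _ fun _ => hiS
  obtain ⟨j, hj, ⟨g⟩⟩ := exists_embedding_summand_of_connected A (hconn i) φ
  obtain ⟨x₀⟩ := (hconn i).nonempty
  have hjT : j ∈ T := hj x₀ ▸ (Embedding.complEquiv.symm f ⟨⟨i, x₀⟩, hiS⟩).2
  exact hemb i j (fun hij => hiT (hij ▸ hjT)) ⟨g⟩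

theorem statement_7 {r : ℕ} {Vv : Fin r → Type} [∀ a, Fintype (Vv a)]
    [∀ a, Nonempty (Vv a)] (A : ∀ a, SimpleGraph (Vv a))
    (hconn : ∀ a, (A a).Connected)
    (hemb : ∀ a b : Fin r, a ≠ b → ¬ Nonempty (A a ↪g A b))
    (S T : Finset (Fin r)) (hS : S.Nonempty) (hT : T.Nonempty) (hST : ¬ S ⊆ T) :
    ¬ Nonempty (Gcon A (S : Set (Fin r)) ↪g Gcon A (T : Set (Fin r))) :=
  statement_7_general A hconn hemb S T hST

end PaperFO
end

section
/- Define the integer sequence m_0 = 2 and m_{i+1} = C(2·m_i, m_i)/2 for i ≥ 0 (this is an integer since C(2m, m) is even for every integer m ≥ 1). Then m_i > Tower(i) for every i ≥ 0, where Tower(0) = 1 and Tower(i+1) = 2^{Tower(i)}. -/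
namespace PaperFO

/-- The sequence `m_i` of the paper: `m_0 = 2`, `m_{i+1} = C(2 m_i, m_i)/2`. -/
def mseq : ℕ → ℕ
  | 0 => 2
  | i + 1 => Nat.choose (2 * mseq i) (mseq i) / 2

lemma cb_ge (m : ℕ) (h : 2 ≤ m) : 2 ^ m + 2 ≤ Nat.centralBinom m := by
  induction m, h using Nat.le_induction with
  | base => decide
  | succ m hm ih =>
    have key := Nat.succ_mul_centralBinom_succ m
    have h3 : 3 * Nat.centralBinom m ≤ Nat.centralBinom (m + 1) := by
      have : (m + 1) * (3 * Nat.centralBinom m) ≤ (m + 1) * Nat.centralBinom (m + 1) := by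
        rw [key]; ring_nf; nlinarith [Nat.centralBinom_pos m]
      exact Nat.le_of_mul_le_mul_left this (Nat.succ_pos m)
    calc 2 ^ (m + 1) + 2 ≤ 3 * (2 ^ m + 2) := by
          have : 1 ≤ 2 ^ m := Nat.one_le_two_pow
          ring_nf; omega
      _ ≤ 3 * Nat.centralBinom m := by omega
      _ ≤ _ := h3

lemma tower_pos (i : ℕ) : 1 ≤ tower i := by
  cases i with
  | zero => exact le_refl 1
  | succ n => exact Nat.one_le_two_pow

theorem statement_9 (i : ℕ) : tower i < mseq i := by
  induction i with
  | zero => decide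
  | succ i ih =>
    have hm2 : 2 ≤ mseq i := by have := tower_pos i; omega
    have hcb := cb_ge (mseq i) hm2
    have : 2 ^ (mseq i - 1) + 1 ≤ Nat.centralBinom (mseq i) / 2 := by
      have h1 : 2 * (2 ^ (mseq i - 1) + 1) ≤ Nat.centralBinom (mseq i) := by
        have : 2 * 2 ^ (mseq i - 1) = 2 ^ mseq i := by
          rw [← pow_succ']
          congr 1
          omega
        omega
      omega
    have hmono : 2 ^ tower i ≤ 2 ^ (mseq i - 1) :=
      Nat.pow_le_pow_right (by norm_num) (by omega)
    show 2 ^ tower i < Nat.choose (2 * mseq i) (mseq i) / 2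
    rw [← Nat.centralBinom_eq_two_mul_choose]
    omega

end PaperFO
end

section
/- For every integer a ≥ 0 and every digraph G, L_a(G) < Tower(D_a(G) + log* D_a(G) + 2), where L_a(G) is the minimum length of an a-alternating sentence defining G and D_a(G) is the minimum quantifier depth of an a-alternating sentence defining G (both are finite for every digraph G). -/
namespace PaperFO
namespace Fml

/-- The length of a formula: the total number of symbols (an atomic formula
`x = y` or `x ~ y` contributes `3` symbols, a negation `1`, a binary
connective `1`, and a quantifier together with its variable `2`). -/
def len : Fml → ℕ
  | eq _ _ => 3
  | rel _ _ => 3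
  | not φ => len φ + 1
  | and φ ψ => len φ + len ψ + 1
  | or φ ψ => len φ + len ψ + 1
  | all _ φ => len φ + 2
  | ex _ φ => len φ + 2

/-- The number of occurrences of the existential quantifier. -/
def exCount : Fml → ℕ
  | eq _ _ => 0
  | rel _ _ => 0
  | not φ => exCount φ
  | and φ ψ => exCount φ + exCount ψ
  | or φ ψ => exCount φ + exCount ψ
  | all _ φ => exCount φ
  | ex _ φ => exCount φ + 1

/-- The total number of quantifier occurrences. -/
def qCount : Fml → ℕ
  | eq _ _ => 0
  | rel _ _ => 0
  | not φ => qCount φ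
  | and φ ψ => qCount φ + qCount ψ
  | or φ ψ => qCount φ + qCount ψ
  | all _ φ => qCount φ + 1
  | ex _ φ => qCount φ + 1

/-- Implication `A ⇒ B`, a shorthand for `(¬ A) ∨ B`. -/
def imp (A B : Fml) : Fml := .or (.not A) B

end Fml
end PaperFO

namespace PaperFO

/-- `Dalt a r` : the minimum quantifier depth of an `a`-alternating sentence
defining the digraph `(V, r)`. -/
noncomputable def Dalt (a : ℕ) {V : Type} (r : V → V → Prop) : ℕ :=
  sInf {n : ℕ | ∃ φ : Fml, Fml.AltFml a φ ∧ DDefines r φ ∧ φ.depth = n}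

/-- `Lalt a r` : the minimum length of an `a`-alternating sentence defining
the digraph `(V, r)`. -/
noncomputable def Lalt (a : ℕ) {V : Type} (r : V → V → Prop) : ℕ :=
  sInf {n : ℕ | ∃ φ : Fml, Fml.AltFml a φ ∧ DDefines r φ ∧ φ.len = n}


-- ===================== auxiliary development =====================

deriving instance DecidableEq for Fml

namespace Aux
open Fml

/-- Conjunction of a list of formulas (`True`-ish dummy for `[]`, never used as sentence). -/
def conj : List Fml → Fml
  | [] => .eq 0 0
  | [φ] => φ
  | φ :: ψ :: l => .and φ (conj (ψ :: l))

/-- Disjunction of a list of formulas. -/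
def disj : List Fml → Fml
  | [] => .not (.eq 0 0)
  | [φ] => φ
  | φ :: ψ :: l => .or φ (disj (ψ :: l))

theorem eval_conj {V : Type} (r : V → V → Prop) (σ : ℕ → V) :
    ∀ l : List Fml, (conj l).eval r σ ↔ ∀ φ ∈ l, φ.eval r σ
  | [] => by simp [conj, eval]
  | [φ] => by simp [conj]
  | φ :: ψ :: l => by
    rw [show conj (φ :: ψ :: l) = .and φ (conj (ψ :: l)) from rfl]
    rw [show (Fml.and φ (conj (ψ :: l))).eval r σ = (φ.eval r σ ∧ (conj (ψ :: l)).eval r σ) from rfl]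
    rw [eval_conj r σ (ψ :: l)]
    simp_all

theorem eval_disj {V : Type} (r : V → V → Prop) (σ : ℕ → V) :
    ∀ l : List Fml, (disj l).eval r σ ↔ ∃ φ ∈ l, φ.eval r σ
  | [] => by simp [disj, eval]
  | [φ] => by simp [disj]
  | φ :: ψ :: l => by
    rw [show disj (φ :: ψ :: l) = .or φ (disj (ψ :: l)) from rfl]
    rw [show (Fml.or φ (disj (ψ :: l))).eval r σ = (φ.eval r σ ∨ (disj (ψ :: l)).eval r σ) from rfl]
    rw [eval_disj r σ (ψ :: l)]
    simp_all

theorem freeVars_conj {S : Finset ℕ} :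
    ∀ l : List Fml, l ≠ [] → (∀ φ ∈ l, φ.freeVars ⊆ S) → (conj l).freeVars ⊆ S
  | [], h, _ => absurd rfl h
  | [φ], _, h2 => h2 φ (by simp)
  | φ :: ψ :: l, _, h2 => by
    have ih := freeVars_conj (ψ :: l) (by simp) (fun χ hχ => h2 χ (by simp_all))
    have : (conj (φ :: ψ :: l)).freeVars = φ.freeVars ∪ (conj (ψ :: l)).freeVars := rfl
    rw [this]
    exact Finset.union_subset (h2 φ (by simp)) ih

theorem freeVars_disj {S : Finset ℕ} :
    ∀ l : List Fml, l ≠ [] → (∀ φ ∈ l, φ.freeVars ⊆ S) → (disj l).freeVars ⊆ S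
  | [], h, _ => absurd rfl h
  | [φ], _, h2 => h2 φ (by simp)
  | φ :: ψ :: l, _, h2 => by
    have ih := freeVars_disj (ψ :: l) (by simp) (fun χ hχ => h2 χ (by simp_all))
    have : (disj (φ :: ψ :: l)).freeVars = φ.freeVars ∪ (disj (ψ :: l)).freeVars := rfl
    rw [this]
    exact Finset.union_subset (h2 φ (by simp)) ih

theorem negAtomic_conj : ∀ l : List Fml, (∀ φ ∈ l, φ.NegAtomic) → (conj l).NegAtomic
  | [], _ => trivial
  | [φ], h => h φ (by simp)
  | φ :: ψ :: l, h => by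
    refine ⟨h φ (by simp), negAtomic_conj (ψ :: l) (fun χ hχ => h χ (by simp_all))⟩

theorem negAtomic_disj : ∀ l : List Fml, (∀ φ ∈ l, φ.NegAtomic) → (disj l).NegAtomic
  | [], _ => trivial
  | [φ], h => h φ (by simp)
  | φ :: ψ :: l, h => by
    refine ⟨h φ (by simp), negAtomic_disj (ψ :: l) (fun χ hχ => h χ (by simp_all))⟩

theorem qstrings_conj : ∀ (l : List Fml) (s : List Bool), s ∈ (conj l).qstrings →
    s = [] ∨ ∃ φ ∈ l, s ∈ φ.qstrings
  | [], s, hs => Or.inl hs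
  | [φ], s, hs => Or.inr ⟨φ, by simp, hs⟩
  | φ :: ψ :: l, s, hs => by
    rcases hs with hs | hs
    · exact Or.inr ⟨φ, by simp, hs⟩
    · rcases qstrings_conj (ψ :: l) s hs with h | ⟨χ, hχ, hsχ⟩
      · exact Or.inl h
      · exact Or.inr ⟨χ, by simp_all, hsχ⟩

theorem qstrings_disj : ∀ (l : List Fml) (s : List Bool), s ∈ (disj l).qstrings →
    s = [] ∨ ∃ φ ∈ l, s ∈ φ.qstrings
  | [], s, hs => Or.inl hs
  | [φ], s, hs => Or.inr ⟨φ, by simp, hs⟩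
  | φ :: ψ :: l, s, hs => by
    rcases hs with hs | hs
    · exact Or.inr ⟨φ, by simp, hs⟩
    · rcases qstrings_disj (ψ :: l) s hs with h | ⟨χ, hχ, hsχ⟩
      · exact Or.inl h
      · exact Or.inr ⟨χ, by simp_all, hsχ⟩

theorem len_conj : ∀ l : List Fml, (conj l).len ≤ 3 + (l.map (fun φ => φ.len + 1)).sum
  | [] => by simp [conj, len]
  | [φ] => by simp [conj]; omega
  | φ :: ψ :: l => by
    have ih := len_conj (ψ :: l)
    have : (conj (φ :: ψ :: l)).len = φ.len + (conj (ψ :: l)).len + 1 := rfl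
    rw [this]
    simp only [List.map_cons, List.sum_cons] at *
    omega

theorem len_disj : ∀ l : List Fml, (disj l).len ≤ 4 + (l.map (fun φ => φ.len + 1)).sum
  | [] => by simp [disj, len]
  | [φ] => by simp [disj]; omega
  | φ :: ψ :: l => by
    have ih := len_disj (ψ :: l)
    have : (disj (φ :: ψ :: l)).len = φ.len + (disj (ψ :: l)).len + 1 := rfl
    rw [this]
    simp only [List.map_cons, List.sum_cons] at *
    omega

/-- Evaluation only depends on the values of the assignment on free variables. -/
theorem eval_congr {V : Type} (r : V → V → Prop) :
    ∀ (φ : Fml) (σ σ' : ℕ → V), (∀ i ∈ φ.freeVars, σ i = σ' i) →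
      (φ.eval r σ ↔ φ.eval r σ')
  | .eq i j, σ, σ', h => by
    simp only [eval, freeVars] at *
    rw [h i (by simp), h j (by simp)]
  | .rel i j, σ, σ', h => by
    simp only [eval, freeVars] at *
    rw [h i (by simp), h j (by simp)]
  | .not φ, σ, σ', h => by
    simp only [eval]
    rw [eval_congr r φ σ σ' h]
  | .and φ ψ, σ, σ', h => by
    simp only [eval]
    rw [eval_congr r φ σ σ' (fun i hi => h i (by simp [freeVars, hi])),
        eval_congr r ψ σ σ' (fun i hi => h i (by simp [freeVars, hi]))]
  | .or φ ψ, σ, σ', h => by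
    simp only [eval]
    rw [eval_congr r φ σ σ' (fun i hi => h i (by simp [freeVars, hi])),
        eval_congr r ψ σ σ' (fun i hi => h i (by simp [freeVars, hi]))]
  | .all i φ, σ, σ', h => by
    simp only [eval]
    refine forall_congr' fun v => eval_congr r φ _ _ fun j hj => ?_
    by_cases hij : j = i
    · subst hij; simp [Function.update]
    · simp only [Function.update, dif_neg hij]
      exact h j (by simp [freeVars, Finset.mem_erase, hij, hj])
  | .ex i φ, σ, σ', h => by
    simp only [eval]
    refine exists_congr fun v => eval_congr r φ _ _ fun j hj => ?_
    by_cases hij : j = i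
    · subst hij; simp [Function.update]
    · simp only [Function.update, dif_neg hij]
      exact h j (by simp [freeVars, Finset.mem_erase, hij, hj])

theorem eval_sentence {V : Type} (r : V → V → Prop) {φ : Fml} (h : φ.IsSentence)
    (σ σ' : ℕ → V) : φ.eval r σ ↔ φ.eval r σ' :=
  eval_congr r φ σ σ' (by intro i hi; rw [h] at hi; exact absurd hi (Finset.notMem_empty i))


/-- Quantifier-state: the last quantifier seen (if any) and the remaining
number of allowed alternations. -/
abbrev State := Option Bool × ℕ

/-- Whether an `∃` may come next. -/
def okE : State → Prop
  | (some false, b) => 0 < b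
  | _ => True

/-- Whether a `∀` may come next. -/
def okA : State → Prop
  | (some true, b) => 0 < b
  | _ => True

instance : ∀ s : State, Decidable (okE s)
  | (some false, b) => by unfold okE; infer_instance
  | (none, b) => by unfold okE; infer_instance
  | (some true, b) => by unfold okE; infer_instance

instance : ∀ s : State, Decidable (okA s)
  | (some true, b) => by unfold okA; infer_instance
  | (none, b) => by unfold okA; infer_instance
  | (some false, b) => by unfold okA; infer_instance

/-- State after an `∃`. -/
def stE : State → State
  | (some false, b) => (some true, b - 1)
  | (_, b) => (some true, b)

/-- State after a `∀`. -/
def stA : State → State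
  | (some true, b) => (some false, b - 1)
  | (_, b) => (some false, b)

/-- Prepend the context quantifier (if any) to a string. -/
def consQ : Option Bool → List Bool → List Bool
  | none, s => s
  | some q, s => q :: s

/-- Alternation-budget discipline of a formula w.r.t. a state. -/
def FragOK : State → Fml → Prop
  | _, .eq _ _ => True
  | _, .rel _ _ => True
  | s, .not φ => FragOK s φ
  | s, .and φ ψ => FragOK s φ ∧ FragOK s ψ
  | s, .or φ ψ => FragOK s φ ∧ FragOK s ψ
  | s, .all _ φ => okA s ∧ FragOK (stA s) φ
  | s, .ex _ φ => okE s ∧ FragOK (stE s) φ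

theorem qstrings_nonempty : ∀ φ : Fml, ∃ s, s ∈ φ.qstrings
  | .eq _ _ => ⟨[], rfl⟩
  | .rel _ _ => ⟨[], rfl⟩
  | .not φ => qstrings_nonempty φ
  | .and φ ψ => by
    obtain ⟨s, hs⟩ := qstrings_nonempty φ
    exact ⟨s, Or.inl hs⟩
  | .or φ ψ => by
    obtain ⟨s, hs⟩ := qstrings_nonempty φ
    exact ⟨s, Or.inl hs⟩
  | .all i φ => by
    obtain ⟨s, hs⟩ := qstrings_nonempty φ
    exact ⟨false :: s, ⟨s, hs, rfl⟩⟩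
  | .ex i φ => by
    obtain ⟨s, hs⟩ := qstrings_nonempty φ
    exact ⟨true :: s, ⟨s, hs, rfl⟩⟩

theorem altCount_consQ_cons (q : Option Bool) (Q : Bool) (s : List Bool) :
    altCount (consQ q (Q :: s)) =
      (match q with | none => 0 | some p => if p = Q then 0 else 1) + altCount (Q :: s) := by
  cases q with
  | none => simp [consQ]
  | some p => simp [consQ, altCount]

/-- From the `qstrings`-style bound we get the structural discipline. -/
theorem fragOK_of_strings : ∀ (φ : Fml) (q : Option Bool) (b : ℕ),
    (∀ s ∈ φ.qstrings, altCount (consQ q s) ≤ b) → FragOK (q, b) φ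
  | .eq _ _, _, _, _ => trivial
  | .rel _ _, _, _, _ => trivial
  | .not φ, q, b, h => fragOK_of_strings φ q b h
  | .and φ ψ, q, b, h =>
    ⟨fragOK_of_strings φ q b (fun s hs => h s (Or.inl hs)),
     fragOK_of_strings ψ q b (fun s hs => h s (Or.inr hs))⟩
  | .or φ ψ, q, b, h =>
    ⟨fragOK_of_strings φ q b (fun s hs => h s (Or.inl hs)),
     fragOK_of_strings ψ q b (fun s hs => h s (Or.inr hs))⟩
  | .all i φ, q, b, h => by
    obtain ⟨s₀, hs₀⟩ := qstrings_nonempty φ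
    have h0 := h (false :: s₀) ⟨s₀, hs₀, rfl⟩
    have hkey : ∀ s ∈ φ.qstrings, altCount (consQ (some false) s) ≤ (stA (q, b)).2 := by
      intro s hs
      have hb := h (false :: s) ⟨s, hs, rfl⟩
      have hc : altCount (consQ (some false) s) ≤ altCount (false :: s) := by
        cases s <;> simp [consQ, altCount]
      match q with
      | none => simp only [consQ] at hb; exact le_trans hc hb
      | some true =>
        simp only [consQ, altCount, if_neg (by simp : ¬ (true = false))] at hb
        simp only [stA]
        omega
      | some false =>
        simp only [consQ, altCount, if_pos rfl] at hb
        simp only [stA]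
        omega
    constructor
    · match q with
      | some true =>
        simp only [consQ, altCount, if_neg (by simp : ¬ (true = false))] at h0
        unfold okA; omega
      | some false => trivial
      | none => trivial
    · have : stA (q, b) = (some false, (stA (q, b)).2) := by
        match q with
        | some true => rfl
        | some false => rfl
        | none => rfl
      rw [this]
      exact fragOK_of_strings φ (some false) _ hkey
  | .ex i φ, q, b, h => by
    obtain ⟨s₀, hs₀⟩ := qstrings_nonempty φ
    have h0 := h (true :: s₀) ⟨s₀, hs₀, rfl⟩
    have hkey : ∀ s ∈ φ.qstrings, altCount (consQ (some true) s) ≤ (stE (q, b)).2 := by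
      intro s hs
      have hb := h (true :: s) ⟨s, hs, rfl⟩
      have hc : altCount (consQ (some true) s) ≤ altCount (true :: s) := by
        cases s <;> simp [consQ, altCount]
      match q with
      | none => simp only [consQ] at hb; exact le_trans hc hb
      | some false =>
        simp only [consQ, altCount, if_neg (by simp : ¬ (false = true))] at hb
        simp only [stE]
        omega
      | some true =>
        simp only [consQ, altCount, if_pos rfl] at hb
        simp only [stE]
        omega
    constructor
    · match q with
      | some false =>
        simp only [consQ, altCount, if_neg (by simp : ¬ (false = true))] at h0
        unfold okE; omega
      | some true => trivial
      | none => trivial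
    · have : stE (q, b) = (some true, (stE (q, b)).2) := by
        match q with
        | some true => rfl
        | some false => rfl
        | none => rfl
      rw [this]
      exact fragOK_of_strings φ (some true) _ hkey

theorem fragOK_of_altLe {φ : Fml} {a : ℕ} (h : φ.AltLe a) : FragOK (none, a) φ :=
  fragOK_of_strings φ none a (fun s hs => by simpa [consQ] using h s hs)




theorem freeVars_nonempty_of_depth_zero : ∀ φ : Fml, φ.depth = 0 → φ.freeVars.Nonempty
  | .eq i j, _ => ⟨i, by simp [freeVars]⟩
  | .rel i j, _ => ⟨i, by simp [freeVars]⟩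
  | .not φ, h => freeVars_nonempty_of_depth_zero φ h
  | .and φ ψ, h => by
    have : φ.depth = 0 := by simp only [depth] at h; omega
    exact (freeVars_nonempty_of_depth_zero φ this).mono Finset.subset_union_left
  | .or φ ψ, h => by
    have : φ.depth = 0 := by simp only [depth] at h; omega
    exact (freeVars_nonempty_of_depth_zero φ this).mono Finset.subset_union_left
  | .all i φ, h => by simp only [depth] at h; omega
  | .ex i φ, h => by simp only [depth] at h; omega

theorem depth_pos_of_sentence {φ : Fml} (h : φ.IsSentence) : 1 ≤ φ.depth := by
  by_contra hc
  have h0 : φ.depth = 0 := by omega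
  obtain ⟨i, hi⟩ := freeVars_nonempty_of_depth_zero φ h0
  rw [h] at hi
  exact absurd hi (Finset.notMem_empty i)

/-- Quantifier-free transfer between two structures whose atomic data agree on the
free variables. -/
theorem qf_transfer {A B : Type} (rA : A → A → Prop) (rB : B → B → Prop) :
    ∀ (φ : Fml), φ.depth = 0 → ∀ (σ : ℕ → A) (τ : ℕ → B),
      (∀ i ∈ φ.freeVars, ∀ j ∈ φ.freeVars,
        ((σ i = σ j) ↔ (τ i = τ j)) ∧ (rA (σ i) (σ j) ↔ rB (τ i) (τ j))) →
      (φ.eval rA σ ↔ φ.eval rB τ)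
  | .eq i j, _, σ, τ, h => (h i (by simp [freeVars]) j (by simp [freeVars])).1
  | .rel i j, _, σ, τ, h => (h i (by simp [freeVars]) j (by simp [freeVars])).2
  | .not φ, hd, σ, τ, h => not_congr (qf_transfer rA rB φ hd σ τ h)
  | .and φ ψ, hd, σ, τ, h => by
    have hφ : φ.depth = 0 := by simp only [depth] at hd; omega
    have hψ : ψ.depth = 0 := by simp only [depth] at hd; omega
    exact and_congr
      (qf_transfer rA rB φ hφ σ τ (fun i hi j hj =>
        h i (Finset.mem_union_left _ hi) j (Finset.mem_union_left _ hj)))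
      (qf_transfer rA rB ψ hψ σ τ (fun i hi j hj =>
        h i (Finset.mem_union_right _ hi) j (Finset.mem_union_right _ hj)))
  | .or φ ψ, hd, σ, τ, h => by
    have hφ : φ.depth = 0 := by simp only [depth] at hd; omega
    have hψ : ψ.depth = 0 := by simp only [depth] at hd; omega
    exact or_congr
      (qf_transfer rA rB φ hφ σ τ (fun i hi j hj =>
        h i (Finset.mem_union_left _ hi) j (Finset.mem_union_left _ hj)))
      (qf_transfer rA rB ψ hψ σ τ (fun i hi j hj =>
        h i (Finset.mem_union_right _ hi) j (Finset.mem_union_right _ hj)))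
  | .all i φ, hd, _, _, _ => by simp only [depth] at hd; omega
  | .ex i φ, hd, _, _, _ => by simp only [depth] at hd; omega

section Hin

set_option linter.unusedSectionVars false

/-- Classical `Prop → Bool`. -/
noncomputable def pb (p : Prop) : Bool := @decide p (Classical.propDecidable p)

theorem pb_true {p : Prop} : pb p = true ↔ p := by
  simp [pb]

theorem pb_false {p : Prop} : pb p = false ↔ ¬ p := by
  simp [pb]

variable {V : Type} [Fintype V] [Nonempty V] (r : V → V → Prop)

attribute [local instance] Classical.decEq

/-- Literals describing a complete atomic diagram given by entries `f i j`. -/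
def litsOfIdx (k : ℕ) (f : ℕ → ℕ → Bool × Bool) : List Fml :=
  (List.range k).flatMap fun i => (List.range k).flatMap fun j =>
    [(if (f i j).1 then Fml.eq i j else .not (.eq i j)),
     (if (f i j).2 then Fml.rel i j else .not (.rel i j))]

/-- The atomic diagram of a tuple. -/
noncomputable def diag (xs : List V) : List (List (Bool × Bool)) :=
  xs.map fun x => xs.map fun y => (pb (x = y), pb (r x y))

/-- Entry accessor of a diagram. -/
def dEntry (D : List (List (Bool × Bool))) (i j : ℕ) : Bool × Bool :=
  (D.getD i []).getD j (true, false)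

/-- The diagram literals of a diagram value. -/
def litsOfD (D : List (List (Bool × Bool))) : List Fml :=
  litsOfIdx D.length (dEntry D)

/-- Assemble one level of the simulation formula from data (used for counting). -/
noncomputable def build (k : ℕ) (D : List (List (Bool × Bool))) (bE bA : Bool)
    (SE SA : Finset Fml) : Fml :=
  conj (litsOfD D ++ (if bE then (SE.toList.map (Fml.ex k)) else []) ++
        (if bA then [Fml.all k (disj SA.toList)] else []))

/-- The rank-`t` simulation (Hintikka-style) formula of the tuple `xs` in `(V, r)`,
with alternation bookkeeping state `s`. -/
noncomputable def hin : ℕ → State → List V → Fml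
  | 0, _, xs => conj (litsOfD (diag r xs))
  | (t+1), s, xs => conj (litsOfD (diag r xs)
      ++ (if okE s then ((Finset.image (fun v => hin t (stE s) (xs ++ [v])) Finset.univ).toList.map (Fml.ex xs.length)) else [])
      ++ (if okA s then [Fml.all xs.length (disj (Finset.image (fun v => hin t (stA s) (xs ++ [v])) Finset.univ).toList)] else []))

/-- The list of conjuncts at level `t+1`. -/
noncomputable def hinList (t : ℕ) (s : State) (xs : List V) : List Fml :=
  litsOfD (diag r xs)
      ++ (if okE s then ((Finset.image (fun v => hin r t (stE s) (xs ++ [v])) Finset.univ).toList.map (Fml.ex xs.length)) else [])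
      ++ (if okA s then [Fml.all xs.length (disj (Finset.image (fun v => hin r t (stA s) (xs ++ [v])) Finset.univ).toList)] else [])

theorem hin_succ (t : ℕ) (s : State) (xs : List V) :
    hin r (t + 1) s xs = conj (hinList r t s xs) := rfl

theorem length_diag (xs : List V) : (diag r xs).length = xs.length := by
  simp [diag]

theorem dEntry_diag (xs : List V) {i j : ℕ} (hi : i < xs.length) (hj : j < xs.length) :
    dEntry (diag r xs) i j =
      (pb (xs[i] = xs[j]) , pb (r xs[i] xs[j])) := by
  have h1 : (diag r xs).getD i [] = xs.map fun y => (pb (xs[i] = y), pb (r xs[i] y)) := by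
    rw [List.getD_eq_getElem _ _ (by simpa [diag] using hi)]
    simp [diag]
  rw [dEntry, h1, List.getD_eq_getElem _ _ (by simpa using hj)]
  simp

/-- Every member of `litsOfIdx` is one of four literal shapes. -/
theorem mem_litsOfIdx {k : ℕ} {f : ℕ → ℕ → Bool × Bool} {φ : Fml}
    (h : φ ∈ litsOfIdx k f) :
    ∃ i j, i < k ∧ j < k ∧
      (φ = (if (f i j).1 then Fml.eq i j else .not (.eq i j)) ∨
       φ = (if (f i j).2 then Fml.rel i j else .not (.rel i j))) := by
  rcases List.mem_flatMap.1 h with ⟨i, hi, h2⟩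
  rcases List.mem_flatMap.1 h2 with ⟨j, hj, h3⟩
  refine ⟨i, j, List.mem_range.1 hi, List.mem_range.1 hj, ?_⟩
  simpa using h3

theorem litsOfIdx_mem_eq {k : ℕ} (f : ℕ → ℕ → Bool × Bool) {i j : ℕ}
    (hi : i < k) (hj : j < k) :
    (if (f i j).1 then Fml.eq i j else .not (.eq i j)) ∈ litsOfIdx k f := by
  refine List.mem_flatMap.2 ⟨i, List.mem_range.2 hi, List.mem_flatMap.2
    ⟨j, List.mem_range.2 hj, by simp⟩⟩

theorem litsOfIdx_mem_rel {k : ℕ} (f : ℕ → ℕ → Bool × Bool) {i j : ℕ}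
    (hi : i < k) (hj : j < k) :
    (if (f i j).2 then Fml.rel i j else .not (.rel i j)) ∈ litsOfIdx k f := by
  refine List.mem_flatMap.2 ⟨i, List.mem_range.2 hi, List.mem_flatMap.2
    ⟨j, List.mem_range.2 hj, by simp⟩⟩

theorem freeVars_litsOfIdx {k : ℕ} {f : ℕ → ℕ → Bool × Bool} {φ : Fml}
    (h : φ ∈ litsOfIdx k f) : φ.freeVars ⊆ Finset.range k := by
  rcases mem_litsOfIdx h with ⟨i, j, hi, hj, hφ | hφ⟩ <;>
  · subst hφ
    split <;>
    · intro x hx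
      simp only [freeVars] at hx
      rcases Finset.mem_insert.1 hx with h | h
      · subst h; exact Finset.mem_range.2 hi
      · rw [Finset.mem_singleton.1 h]; exact Finset.mem_range.2 hj

theorem negAtomic_litsOfIdx {k : ℕ} {f : ℕ → ℕ → Bool × Bool} {φ : Fml}
    (h : φ ∈ litsOfIdx k f) : φ.NegAtomic := by
  rcases mem_litsOfIdx h with ⟨i, j, hi, hj, hφ | hφ⟩ <;>
  · subst hφ; split <;> trivial

theorem qstrings_litsOfIdx {k : ℕ} {f : ℕ → ℕ → Bool × Bool} {φ : Fml}
    (h : φ ∈ litsOfIdx k f) : ∀ l ∈ φ.qstrings, l = [] := by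
  rcases mem_litsOfIdx h with ⟨i, j, hi, hj, hφ | hφ⟩ <;>
  · subst hφ
    split <;>
    · intro l hl
      simpa [qstrings] using hl

theorem sum_map_le {α : Type} (c : ℕ) : ∀ (l : List α) (g : α → ℕ),
    (∀ x ∈ l, g x ≤ c) → (l.map g).sum ≤ c * l.length
  | [], _, _ => by simp
  | x :: l, g, h => by
    simp only [List.map_cons, List.sum_cons, List.length_cons]
    have := sum_map_le c l g (fun y hy => h y (by simp [hy]))
    have hx := h x (by simp)
    calc g x + (l.map g).sum ≤ c + c * l.length := by omega
    _ = c * (l.length + 1) := by ring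

theorem length_litsOfIdx (k : ℕ) (f : ℕ → ℕ → Bool × Bool) :
    (litsOfIdx k f).length ≤ 2 * k * k := by
  rw [litsOfIdx, List.length_flatMap]
  have h := sum_map_le (2 * k) (List.range k)
      (List.length ∘ fun i => (List.range k).flatMap fun j =>
      [(if (f i j).1 then Fml.eq i j else .not (.eq i j)),
       (if (f i j).2 then Fml.rel i j else .not (.rel i j))]) ?_
  · simpa [Nat.mul_comm, Nat.mul_assoc, Nat.mul_left_comm] using h
  · intro i _
    simp only [Function.comp, List.length_flatMap]
    have h2 := sum_map_le 2 (List.range k)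
        (List.length ∘ fun j =>
        [(if (f i j).1 then Fml.eq i j else .not (.eq i j)),
         (if (f i j).2 then Fml.rel i j else .not (.rel i j))]) ?_
    · simp [Nat.mul_comm]
    · intro j _; rfl

theorem len_litsOfIdx_mem {k : ℕ} {f : ℕ → ℕ → Bool × Bool} {φ : Fml}
    (h : φ ∈ litsOfIdx k f) : φ.len ≤ 4 := by
  rcases mem_litsOfIdx h with ⟨i, j, hi, hj, hφ | hφ⟩ <;>
  · subst hφ; split <;> simp [len]

theorem getD_snoc_lt (xs : List V) (v d : V) {n : ℕ} (h : n < xs.length) :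
    (xs ++ [v]).getD n d = xs.getD n d :=
  List.getD_append _ _ _ _ h

theorem getD_snoc_self (xs : List V) (v d : V) :
    (xs ++ [v]).getD xs.length d = v := by
  rw [List.getD_eq_getElem _ _ (by simp)]
  exact List.getElem_concat_length rfl _

theorem okE_or_okA (s : State) : okE s ∨ okA s := by
  rcases s with ⟨q, b⟩
  match q with
  | none => exact Or.inl trivial
  | some true => exact Or.inl trivial
  | some false => exact Or.inr trivial

/-- Classification of the conjuncts of `hinList`. -/
theorem hinList_parts {t : ℕ} {s : State} {xs : List V} {φ : Fml}
    (h : φ ∈ hinList r t s xs) :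
    φ ∈ litsOfD (diag r xs) ∨
    (okE s ∧ ∃ v : V, φ = Fml.ex xs.length (hin r t (stE s) (xs ++ [v]))) ∨
    (okA s ∧ φ = Fml.all xs.length (disj
        (Finset.image (fun v => hin r t (stA s) (xs ++ [v])) Finset.univ).toList)) := by
  rcases List.mem_append.1 h with h | h
  · rcases List.mem_append.1 h with h | h
    · exact Or.inl h
    · right; left
      by_cases hok : okE s
      · rw [if_pos hok] at h
        rcases List.mem_map.1 h with ⟨ψ, hmem, rfl⟩
        rcases Finset.mem_image.1 (Finset.mem_toList.1 hmem) with ⟨v, _, rfl⟩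
        exact ⟨hok, v, rfl⟩
      · rw [if_neg hok] at h
        simp at h
  · right; right
    by_cases hok : okA s
    · rw [if_pos hok] at h
      simp only [List.mem_singleton] at h
      exact ⟨hok, h⟩
    · rw [if_neg hok] at h
      simp at h

theorem hinList_mem_lits {t : ℕ} {s : State} {xs : List V} {φ : Fml}
    (h : φ ∈ litsOfD (diag r xs)) : φ ∈ hinList r t s xs := by
  exact List.mem_append.2 (Or.inl (List.mem_append.2 (Or.inl h)))

theorem hinList_mem_ex {t : ℕ} {s : State} {xs : List V} (hok : okE s) (v : V) :
    Fml.ex xs.length (hin r t (stE s) (xs ++ [v])) ∈ hinList r t s xs := by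
  apply List.mem_append.2; left
  apply List.mem_append.2; right
  rw [if_pos hok]
  exact List.mem_map.2 ⟨_, Finset.mem_toList.2 (Finset.mem_image.2 ⟨v, Finset.mem_univ v, rfl⟩), rfl⟩

theorem hinList_mem_all {t : ℕ} {s : State} {xs : List V} (hok : okA s) :
    Fml.all xs.length (disj
        (Finset.image (fun v => hin r t (stA s) (xs ++ [v])) Finset.univ).toList) ∈
      hinList r t s xs := by
  apply List.mem_append.2; right
  rw [if_pos hok]
  simp

theorem litsOfD_diag_ne_nil {xs : List V} (h : xs ≠ []) : litsOfD (diag r xs) ≠ [] := by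
  intro hcon
  have hlen : 0 < xs.length := List.length_pos_iff.2 h
  have hmem : (if (dEntry (diag r xs) 0 0).1 then Fml.eq 0 0 else .not (.eq 0 0)) ∈
      litsOfD (diag r xs) :=
    litsOfIdx_mem_eq _ (by simpa [length_diag] using hlen) (by simpa [length_diag] using hlen)
  rw [hcon] at hmem
  simp at hmem

theorem hinList_ne_nil (t : ℕ) (s : State) (xs : List V) : hinList r t s xs ≠ [] := by
  intro hcon
  rcases List.append_eq_nil_iff.1 hcon with ⟨h12, h3⟩
  rcases List.append_eq_nil_iff.1 h12 with ⟨h1, h2⟩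
  obtain ⟨v⟩ := ‹Nonempty V›
  rcases okE_or_okA s with hok | hok
  · have := hinList_mem_ex r (t := t) (s := s) (xs := xs) hok v
    rw [hinList, h1, h2, h3] at this
    simp at this
  · have := hinList_mem_all r (t := t) (s := s) (xs := xs) hok
    rw [hinList, h1, h2, h3] at this
    simp at this

theorem toList_image_ne_nil (g : V → Fml) :
    (Finset.image g Finset.univ).toList ≠ [] := by
  intro hcon
  obtain ⟨v⟩ := ‹Nonempty V›
  have : g v ∈ (Finset.image g Finset.univ).toList :=
    Finset.mem_toList.2 (Finset.mem_image.2 ⟨v, Finset.mem_univ v, rfl⟩)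
  rw [hcon] at this
  simp at this

theorem freeVars_hin : ∀ (t : ℕ) (s : State) (xs : List V), xs ≠ [] ∨ 0 < t →
    (hin r t s xs).freeVars ⊆ Finset.range xs.length := by
  intro t
  induction t with
  | zero =>
    intro s xs hne
    rcases hne with hne | hne
    · show (conj (litsOfD (diag r xs))).freeVars ⊆ _
      apply freeVars_conj _ (litsOfD_diag_ne_nil r hne)
      intro φ hφ
      exact (freeVars_litsOfIdx hφ).trans (by rw [length_diag])
    · omega
  | succ t ih =>
    intro s xs _
    rw [hin_succ]
    apply freeVars_conj _ (hinList_ne_nil r t s xs)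
    intro φ hφ
    rcases hinList_parts r hφ with h | ⟨hok, v, rfl⟩ | ⟨hok, rfl⟩
    · exact (freeVars_litsOfIdx h).trans (by rw [length_diag])
    · intro x hx
      simp only [freeVars, Finset.mem_erase] at hx
      have := ih (stE s) (xs ++ [v]) (by simp) hx.2
      simp only [Finset.mem_range, List.length_append, List.length_cons,
        List.length_nil] at this ⊢
      omega
    · intro x hx
      simp only [freeVars, Finset.mem_erase] at hx
      have h2 : (disj (Finset.image (fun v => hin r t (stA s) (xs ++ [v])) Finset.univ).toList).freeVars
          ⊆ Finset.range (xs.length + 1) := by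
        apply freeVars_disj _ (toList_image_ne_nil _)
        intro ψ hψ
        rcases Finset.mem_image.1 (Finset.mem_toList.1 hψ) with ⟨v, _, rfl⟩
        exact (ih (stA s) (xs ++ [v]) (by simp)).trans (by simp)
      have := h2 hx.2
      simp only [Finset.mem_range] at this ⊢
      omega

theorem negAtomic_hin : ∀ (t : ℕ) (s : State) (xs : List V), (hin r t s xs).NegAtomic := by
  intro t
  induction t with
  | zero =>
    intro s xs
    exact negAtomic_conj _ (fun φ hφ => negAtomic_litsOfIdx hφ)
  | succ t ih =>
    intro s xs
    rw [hin_succ]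
    apply negAtomic_conj
    intro φ hφ
    rcases hinList_parts r hφ with h | ⟨hok, v, rfl⟩ | ⟨hok, rfl⟩
    · exact negAtomic_litsOfIdx h
    · exact ih (stE s) (xs ++ [v])
    · apply negAtomic_disj
      intro ψ hψ
      rcases Finset.mem_image.1 (Finset.mem_toList.1 hψ) with ⟨v, _, rfl⟩
      exact ih (stA s) (xs ++ [v])


theorem altCount_consQ_nil (q : Option Bool) : altCount (consQ q []) = 0 := by
  cases q <;> rfl

theorem altCount_cons_cons (x y : Bool) (l : List Bool) :
    altCount (x :: y :: l) = (if x = y then 0 else 1) + altCount (y :: l) := rfl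

theorem stE_fst (s : State) : (stE s).1 = some true := by
  rcases s with ⟨q, b⟩
  match q with
  | none => rfl
  | some true => rfl
  | some false => rfl

theorem stA_fst (s : State) : (stA s).1 = some false := by
  rcases s with ⟨q, b⟩
  match q with
  | none => rfl
  | some true => rfl
  | some false => rfl

theorem step_ex {s : State} {l' : List Bool} (hok : okE s)
    (h : altCount (consQ (some true) l') ≤ (stE s).2) :
    altCount (consQ s.1 (true :: l')) ≤ s.2 := by
  rcases s with ⟨q, b⟩
  match q with
  | none =>
    simpa [consQ, stE, stA] using h
  | some true =>
    have hs : stE ((some true : Option Bool), b) = (some true, b) := rfl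
    rw [hs] at h
    simp [consQ, altCount_cons_cons, altCount] at *
    omega
  | some false =>
    have hs : stE ((some false : Option Bool), b) = (some true, b - 1) := rfl
    rw [hs] at h
    have hb : 0 < b := hok
    simp only [consQ, altCount_cons_cons] at *
    simp only [if_neg (by simp : ¬ (false = true))]
    omega

theorem step_all {s : State} {l' : List Bool} (hok : okA s)
    (h : altCount (consQ (some false) l') ≤ (stA s).2) :
    altCount (consQ s.1 (false :: l')) ≤ s.2 := by
  rcases s with ⟨q, b⟩
  match q with
  | none =>
    simpa [consQ, stE, stA] using h
  | some false =>
    have hs : stA ((some false : Option Bool), b) = (some false, b) := rfl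
    rw [hs] at h
    simp [consQ, altCount_cons_cons, altCount] at *
    omega
  | some true =>
    have hs : stA ((some true : Option Bool), b) = (some false, b - 1) := rfl
    rw [hs] at h
    have hb : 0 < b := hok
    simp only [consQ, altCount_cons_cons] at *
    simp only [if_neg (by simp : ¬ (true = false))]
    omega

theorem alt_hin : ∀ (t : ℕ) (s : State) (xs : List V),
    ∀ l ∈ (hin r t s xs).qstrings, altCount (consQ s.1 l) ≤ s.2 := by
  intro t
  induction t with
  | zero =>
    intro s xs l hl
    rcases qstrings_conj _ _ hl with rfl | ⟨φ, hφ, hlφ⟩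
    · rw [altCount_consQ_nil]; omega
    · rw [qstrings_litsOfIdx hφ l hlφ, altCount_consQ_nil]; omega
  | succ t ih =>
    intro s xs l hl
    rw [hin_succ] at hl
    rcases qstrings_conj _ _ hl with rfl | ⟨φ, hφ, hlφ⟩
    · rw [altCount_consQ_nil]; omega
    · rcases hinList_parts r hφ with h | ⟨hok, v, rfl⟩ | ⟨hok, rfl⟩
      · rw [qstrings_litsOfIdx h l hlφ, altCount_consQ_nil]; omega
      · rcases hlφ with ⟨l', hl', rfl⟩
        have := ih (stE s) (xs ++ [v]) l' hl'
        rw [stE_fst] at this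
        exact step_ex hok this
      · rcases hlφ with ⟨l'', hl'', rfl⟩
        rcases qstrings_disj _ _ hl'' with rfl | ⟨ψ, hψ, hlψ⟩
        · -- the string is [false]
          rcases s with ⟨q, b⟩
          match q with
          | none => simp [consQ, altCount]
          | some false => simp [consQ, altCount_cons_cons, altCount]
          | some true =>
            have hb : 0 < b := hok
            simp only [consQ, altCount_cons_cons, if_neg (by simp : ¬ (true = false))]
            simp [altCount]
            omega
        · rcases Finset.mem_image.1 (Finset.mem_toList.1 hψ) with ⟨v, _, rfl⟩
          have := ih (stA s) (xs ++ [v]) l'' hlψ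
          rw [stA_fst] at this
          exact step_all hok this

theorem lit_eval_self (v0 : V) (xs : List V) :
    ∀ φ ∈ litsOfD (diag r xs), φ.eval r (fun n => xs.getD n v0) := by
  intro φ hφ
  rcases mem_litsOfIdx hφ with ⟨i, j, hi, hj, hφ | hφ⟩
  all_goals (
    rw [length_diag] at hi hj
    subst hφ)
  · rw [dEntry_diag r xs hi hj]
    by_cases h : xs[i] = xs[j]
    · rw [if_pos (by simpa [pb_true] using h)]
      show (fun n => xs.getD n v0) i = (fun n => xs.getD n v0) j
      simp only [List.getD_eq_getElem _ _ hi, List.getD_eq_getElem _ _ hj]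
      exact h
    · rw [if_neg (by simpa [pb_true] using h)]
      show ¬ ((fun n => xs.getD n v0) i = (fun n => xs.getD n v0) j)
      simp only [List.getD_eq_getElem _ _ hi, List.getD_eq_getElem _ _ hj]
      exact h
  · rw [dEntry_diag r xs hi hj]
    by_cases h : r xs[i] xs[j]
    · rw [if_pos (by simpa [pb_true] using h)]
      show r ((fun n => xs.getD n v0) i) ((fun n => xs.getD n v0) j)
      simp only [List.getD_eq_getElem _ _ hi, List.getD_eq_getElem _ _ hj]
      exact h
    · rw [if_neg (by simpa [pb_true] using h)]
      show ¬ r ((fun n => xs.getD n v0) i) ((fun n => xs.getD n v0) j)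
      simp only [List.getD_eq_getElem _ _ hi, List.getD_eq_getElem _ _ hj]
      exact h

theorem snoc_agree (v0 : V) (xs : List V) (v : V) :
    ∀ m ∈ Finset.range (xs.length + 1),
      (fun n => (xs ++ [v]).getD n v0) m =
        Function.update (fun n => xs.getD n v0) xs.length v m := by
  intro m hm
  rcases Nat.lt_or_ge m xs.length with h | h
  · rw [Function.update_of_ne (by omega)]
    exact getD_snoc_lt xs v v0 h
  · have : m = xs.length := by simp only [Finset.mem_range] at hm; omega
    subst this
    rw [Function.update_self]
    exact getD_snoc_self xs v v0

theorem hin_self (v0 : V) : ∀ (t : ℕ) (s : State) (xs : List V),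
    (hin r t s xs).eval r (fun n => xs.getD n v0) := by
  intro t
  induction t with
  | zero =>
    intro s xs
    exact (eval_conj _ _ _).2 (lit_eval_self r v0 xs)
  | succ t ih =>
    intro s xs
    rw [hin_succ]
    refine (eval_conj _ _ _).2 ?_
    intro φ hφ
    rcases hinList_parts r hφ with h | ⟨hok, v, rfl⟩ | ⟨hok, rfl⟩
    · exact lit_eval_self r v0 xs φ h
    · refine ⟨v, ?_⟩
      have := ih (stE s) (xs ++ [v])
      exact (eval_congr r _ _ _ (fun m hm => snoc_agree v0 xs v m
        (by simpa using (freeVars_hin r t (stE s) (xs ++ [v]) (Or.inl (by simp)) hm)))).1 this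
    · intro v
      refine (eval_disj _ _ _).2 ⟨hin r t (stA s) (xs ++ [v]),
        Finset.mem_toList.2 (Finset.mem_image.2 ⟨v, Finset.mem_univ v, rfl⟩), ?_⟩
      have := ih (stA s) (xs ++ [v])
      exact (eval_congr r _ _ _ (fun m hm => snoc_agree v0 xs v m
        (by simpa using (freeVars_hin r t (stA s) (xs ++ [v]) (Or.inl (by simp)) hm)))).1 this


theorem hin_atoms {W : Type} (r' : W → W → Prop) (v0 : V) {τ : ℕ → W}
    {t : ℕ} {s : State} {xs : List V}
    (h : (hin r t s xs).eval r' τ) {i j : ℕ} (hi : i < xs.length) (hj : j < xs.length) :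
    ((xs.getD i v0 = xs.getD j v0) ↔ τ i = τ j) ∧
      (r (xs.getD i v0) (xs.getD j v0) ↔ r' (τ i) (τ j)) := by
  have hall : ∀ φ ∈ litsOfD (diag r xs), φ.eval r' τ := by
    intro φ hφ
    cases t with
    | zero => exact (eval_conj _ _ _).1 h φ hφ
    | succ t =>
      rw [hin_succ] at h
      exact (eval_conj _ _ _).1 h φ (hinList_mem_lits r hφ)
  have hgi : xs.getD i v0 = xs[i] := List.getD_eq_getElem _ _ hi
  have hgj : xs.getD j v0 = xs[j] := List.getD_eq_getElem _ _ hj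
  constructor
  · have hlit := hall _ (litsOfIdx_mem_eq (dEntry (diag r xs)) (k := (diag r xs).length) (i := i) (j := j)
      (by rwa [length_diag]) (by rwa [length_diag]))
    rw [dEntry_diag r xs hi hj] at hlit
    by_cases hxy : xs[i] = xs[j]
    · rw [if_pos (by simpa [pb_true] using hxy)] at hlit
      exact ⟨fun _ => hlit, fun _ => by rw [hgi, hgj]; exact hxy⟩
    · rw [if_neg (by simpa [pb_true] using hxy)] at hlit
      constructor
      · intro hc; rw [hgi, hgj] at hc; exact absurd hc hxy
      · intro hc; exact absurd hc hlit
  · have hlit := hall _ (litsOfIdx_mem_rel (dEntry (diag r xs)) (k := (diag r xs).length) (i := i) (j := j)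
      (by rwa [length_diag]) (by rwa [length_diag]))
    rw [dEntry_diag r xs hi hj] at hlit
    by_cases hxy : r xs[i] xs[j]
    · rw [if_pos (by simpa [pb_true] using hxy)] at hlit
      exact ⟨fun _ => hlit, fun _ => by rw [hgi, hgj]; exact hxy⟩
    · rw [if_neg (by simpa [pb_true] using hxy)] at hlit
      constructor
      · intro hc; rw [hgi, hgj] at hc; exact absurd hc hxy
      · intro hc; exact absurd hc hlit

/-- The one-sided transfer lemma: if `(W, r')` satisfies the simulation formula of
`(V, r)` at `(t, s, xs)`, then every sufficiently shallow, alternation-disciplined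
formula true in `(V, r)` (variables interpreted via positions in `xs`) is true in
`(W, r')`. -/
theorem hin_transfer {W : Type} (r' : W → W → Prop) (v0 : V) (w0 : W) :
    ∀ (φ : Fml) (t : ℕ) (s : State) (xs : List V) (τ : ℕ → W) (f : ℕ → ℕ),
      (hin r t s xs).eval r' τ →
      φ.NegAtomic → FragOK s φ → φ.depth ≤ t →
      (∀ i ∈ φ.freeVars, f i < xs.length) →
      φ.eval r (fun i => xs.getD (f i) v0) →
      φ.eval r' (fun i => if f i < xs.length then τ (f i) else w0) := by
  intro φ
  induction φ with
  | eq i j =>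
    intro t s xs τ f h _ _ _ hb hg
    have hbi : f i < xs.length := hb i (by simp [freeVars])
    have hbj : f j < xs.length := hb j (by simp [freeVars])
    show (if f i < xs.length then τ (f i) else w0) = (if f j < xs.length then τ (f j) else w0)
    rw [if_pos hbi, if_pos hbj]
    exact ((hin_atoms r r' v0 h hbi hbj).1).1 hg
  | rel i j =>
    intro t s xs τ f h _ _ _ hb hg
    have hbi : f i < xs.length := hb i (by simp [freeVars])
    have hbj : f j < xs.length := hb j (by simp [freeVars])
    show r' (if f i < xs.length then τ (f i) else w0) (if f j < xs.length then τ (f j) else w0)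
    rw [if_pos hbi, if_pos hbj]
    exact ((hin_atoms r r' v0 h hbi hbj).2).1 hg
  | not φ' ihφ =>
    intro t s xs τ f h hna _ _ hb hg
    match φ', hna with
    | .eq i j, _ =>
      have hbi : f i < xs.length := hb i (by simp [freeVars])
      have hbj : f j < xs.length := hb j (by simp [freeVars])
      show ¬ ((if f i < xs.length then τ (f i) else w0) = (if f j < xs.length then τ (f j) else w0))
      rw [if_pos hbi, if_pos hbj]
      exact fun hc => hg (((hin_atoms r r' v0 h hbi hbj).1).2 hc)
    | .rel i j, _ =>
      have hbi : f i < xs.length := hb i (by simp [freeVars])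
      have hbj : f j < xs.length := hb j (by simp [freeVars])
      show ¬ r' (if f i < xs.length then τ (f i) else w0) (if f j < xs.length then τ (f j) else w0)
      rw [if_pos hbi, if_pos hbj]
      exact fun hc => hg (((hin_atoms r r' v0 h hbi hbj).2).2 hc)
  | and φ₁ φ₂ ih₁ ih₂ =>
    intro t s xs τ f h hna hfr hd hb hg
    exact ⟨ih₁ t s xs τ f h hna.1 hfr.1 (le_trans (le_max_left _ _) hd)
        (fun i hi => hb i (Finset.mem_union_left _ hi)) hg.1,
      ih₂ t s xs τ f h hna.2 hfr.2 (le_trans (le_max_right _ _) hd)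
        (fun i hi => hb i (Finset.mem_union_right _ hi)) hg.2⟩
  | or φ₁ φ₂ ih₁ ih₂ =>
    intro t s xs τ f h hna hfr hd hb hg
    rcases hg with hg | hg
    · exact Or.inl (ih₁ t s xs τ f h hna.1 hfr.1 (le_trans (le_max_left _ _) hd)
        (fun i hi => hb i (Finset.mem_union_left _ hi)) hg)
    · exact Or.inr (ih₂ t s xs τ f h hna.2 hfr.2 (le_trans (le_max_right _ _) hd)
        (fun i hi => hb i (Finset.mem_union_right _ hi)) hg)
  | ex i φ' ihφ =>
    intro t s xs τ f h hna hfr hd hb hg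
    cases t with
    | zero => simp only [depth] at hd; omega
    | succ t =>
      obtain ⟨hok, hfr'⟩ := hfr
      obtain ⟨v, hv⟩ := hg
      rw [hin_succ] at h
      have hEx := (eval_conj _ _ _).1 h _ (hinList_mem_ex r (t := t) (s := s) (xs := xs) hok v)
      obtain ⟨w, hw⟩ := hEx
      have hGin : φ'.eval r (fun n => (xs ++ [v]).getD (Function.update f i xs.length n) v0) := by
        refine (eval_congr r φ' _ _ ?_).1 hv
        intro j hj
        by_cases hji : j = i
        · subst hji
          rw [Function.update_self, Function.update_self]
          exact (getD_snoc_self xs v v0).symm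
        · rw [Function.update_of_ne hji, Function.update_of_ne hji]
          have hfj : f j < xs.length := hb j (by
            simp only [freeVars, Finset.mem_erase]; exact ⟨hji, hj⟩)
          exact (getD_snoc_lt xs v v0 hfj).symm
      have hbnd : ∀ j ∈ φ'.freeVars, Function.update f i xs.length j < (xs ++ [v]).length := by
        intro j hj
        simp only [List.length_append, List.length_cons, List.length_nil]
        by_cases hji : j = i
        · subst hji; rw [Function.update_self]; omega
        · rw [Function.update_of_ne hji]
          have := hb j (by simp only [freeVars, Finset.mem_erase]; exact ⟨hji, hj⟩)
          omega
      have hout := ihφ t (stE s) (xs ++ [v]) (Function.update τ xs.length w)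
        (Function.update f i xs.length) hw hna hfr'
        (by simp only [depth] at hd; omega) hbnd hGin
      refine ⟨w, ?_⟩
      refine (eval_congr r' φ' _ _ ?_).1 hout
      intro j hj
      by_cases hji : j = i
      · subst hji
        rw [Function.update_self, Function.update_self]
        rw [if_pos (by simp)]
        rw [Function.update_self]
      · rw [Function.update_of_ne hji, Function.update_of_ne hji]
        have hfj : f j < xs.length := hb j (by
          simp only [freeVars, Finset.mem_erase]; exact ⟨hji, hj⟩)
        rw [if_pos (by simp only [List.length_append, List.length_cons, List.length_nil]; omega),
          if_pos hfj]
        rw [Function.update_of_ne (by omega)]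
  | all i φ' ihφ =>
    intro t s xs τ f h hna hfr hd hb hg
    cases t with
    | zero => simp only [depth] at hd; omega
    | succ t =>
      obtain ⟨hok, hfr'⟩ := hfr
      rw [hin_succ] at h
      have hAll := (eval_conj _ _ _).1 h _ (hinList_mem_all r (t := t) (s := s) (xs := xs) hok)
      intro w
      have hdis := hAll w
      obtain ⟨ψ, hmem, hψ⟩ := (eval_disj _ _ _).1 hdis
      obtain ⟨v, _, rfl⟩ := Finset.mem_image.1 (Finset.mem_toList.1 hmem)
      have hv := hg v
      have hGin : φ'.eval r (fun n => (xs ++ [v]).getD (Function.update f i xs.length n) v0) := by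
        refine (eval_congr r φ' _ _ ?_).1 hv
        intro j hj
        by_cases hji : j = i
        · subst hji
          rw [Function.update_self, Function.update_self]
          exact (getD_snoc_self xs v v0).symm
        · rw [Function.update_of_ne hji, Function.update_of_ne hji]
          have hfj : f j < xs.length := hb j (by
            simp only [freeVars, Finset.mem_erase]; exact ⟨hji, hj⟩)
          exact (getD_snoc_lt xs v v0 hfj).symm
      have hbnd : ∀ j ∈ φ'.freeVars, Function.update f i xs.length j < (xs ++ [v]).length := by
        intro j hj
        simp only [List.length_append, List.length_cons, List.length_nil]
        by_cases hji : j = i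
        · subst hji; rw [Function.update_self]; omega
        · rw [Function.update_of_ne hji]
          have := hb j (by simp only [freeVars, Finset.mem_erase]; exact ⟨hji, hj⟩)
          omega
      have hout := ihφ t (stA s) (xs ++ [v]) (Function.update τ xs.length w)
        (Function.update f i xs.length) hψ hna hfr'
        (by simp only [depth] at hd; omega) hbnd hGin
      refine (eval_congr r' φ' _ _ ?_).1 hout
      intro j hj
      by_cases hji : j = i
      · subst hji
        rw [Function.update_self, Function.update_self]
        rw [if_pos (by simp)]
        rw [Function.update_self]
      · rw [Function.update_of_ne hji, Function.update_of_ne hji]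
        have hfj : f j < xs.length := hb j (by
          simp only [freeVars, Finset.mem_erase]; exact ⟨hji, hj⟩)
        rw [if_pos (by simp only [List.length_append, List.length_cons, List.length_nil]; omega),
          if_pos hfj]
        rw [Function.update_of_ne (by omega)]


theorem pb_congr {p q : Prop} (h : p ↔ q) : pb p = pb q := by
  by_cases hp : p
  · rw [pb_true.2 hp, (pb_true.2 (h.1 hp)).symm]
  · rw [pb_false.2 hp, (pb_false.2 (fun hq => hp (h.2 hq))).symm]

theorem ite_pb {p : Prop} [Decidable p] {α : Sort*} (A B : α) :
    (if p then A else B) = (if pb p then A else B) := by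
  by_cases h : p
  · rw [if_pos h, if_pos (pb_true.2 h)]
  · rw [if_neg h, if_neg (by simp [pb_false.2 h])]

noncomputable def tuplesF (k : ℕ) : Finset (List V) :=
  Finset.image (fun g : Fin k → V => List.ofFn g) Finset.univ

theorem mem_tuplesF {k : ℕ} {xs : List V} (h : xs.length = k) : xs ∈ tuplesF k := by
  subst h
  simp only [tuplesF, Finset.mem_image]
  exact ⟨fun i => xs.get i, Finset.mem_univ _, List.ofFn_get xs⟩

noncomputable def DS (k : ℕ) : Finset (List (List (Bool × Bool))) :=
  Finset.image (fun xs => diag r xs) (tuplesF (V := V) k)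

noncomputable def recover (k : ℕ) (pq : (Fin k → Fin k) × (Fin k → Fin k → Bool)) :
    List (List (Bool × Bool)) :=
  List.ofFn (fun i => List.ofFn (fun j => (pb (pq.1 i = pq.1 j), pq.2 i j)))

theorem diag_factors {k : ℕ} (g : Fin k → V) :
    ∃ pq : (Fin k → Fin k) × (Fin k → Fin k → Bool),
      diag r (List.ofFn g) = recover k pq := by
  have hmem : ∀ i : Fin k, g i ∈ List.ofFn g := fun i => List.mem_ofFn.2 ⟨i, rfl⟩
  have hlt : ∀ i : Fin k, (List.ofFn g).idxOf (g i) < k := fun i => by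
    have := List.idxOf_lt_length_iff.2 (hmem i)
    simpa using this
  refine ⟨⟨fun i => ⟨(List.ofFn g).idxOf (g i), hlt i⟩, fun i j => pb (r (g i) (g j))⟩, ?_⟩
  have h1 : diag r (List.ofFn g) =
      List.ofFn (fun i : Fin k => List.ofFn (fun j : Fin k => (pb (g i = g j), pb (r (g i) (g j))))) := by
    rw [diag, List.map_ofFn]
    congr 1
    funext i
    simp only [Function.comp]
    rw [List.map_ofFn]
    rfl
  rw [h1, recover]
  congr 1
  funext i
  congr 1
  funext j
  simp only [Prod.mk.injEq]
  refine ⟨pb_congr ?_, trivial⟩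
  have hiff : g i = g j ↔ (List.ofFn g).idxOf (g i) = (List.ofFn g).idxOf (g j) := by
    constructor
    · intro h; rw [h]
    · intro h
      have h1 : (List.ofFn g)[(List.ofFn g).idxOf (g i)]'(by simpa using hlt i) = g i :=
        List.getElem_idxOf (by simpa using hlt i)
      have h2 : (List.ofFn g)[(List.ofFn g).idxOf (g j)]'(by simpa using hlt j) = g j :=
        List.getElem_idxOf (by simpa using hlt j)
      rw [← h1, ← h2]
      congr 1
  rw [hiff]
  exact ⟨fun h => by simpa [Fin.ext_iff] using h, fun h => by simpa [Fin.ext_iff] using h⟩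

theorem DS_card (k : ℕ) : (DS (V := V) r k).card ≤ k ^ k * 2 ^ (k * k) := by
  have hsub : DS (V := V) r k ⊆ Finset.image (recover k) Finset.univ := by
    intro D hD
    simp only [DS, tuplesF, Finset.mem_image] at hD
    obtain ⟨xs, ⟨g, _, rfl⟩, rfl⟩ := hD
    rcases diag_factors r g with ⟨pq, hpq⟩
    exact Finset.mem_image.2 ⟨pq, Finset.mem_univ _, hpq.symm⟩
  calc (DS (V := V) r k).card ≤ (Finset.image (recover k) (Finset.univ :
      Finset ((Fin k → Fin k) × (Fin k → Fin k → Bool)))).card := Finset.card_le_card hsub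
  _ ≤ Fintype.card ((Fin k → Fin k) × (Fin k → Fin k → Bool)) := by
      classical
      exact le_trans Finset.card_image_le (by simp)
  _ = k ^ k * 2 ^ (k * k) := by
      classical
      rw [Fintype.card_prod, Fintype.card_fun, Fintype.card_fun]
      simp [Fintype.card_fun, pow_mul]

/-- The set of possible simulation formulas at level `t` (pebble number `d - t`). -/
noncomputable def HS (d : ℕ) : ℕ → Finset Fml
  | 0 => Finset.image (fun D => conj (litsOfD D)) (DS (V := V) r d)
  | (t+1) => Finset.image
      (fun x : (List (List (Bool × Bool)) × (Bool × Bool)) × (Finset Fml × Finset Fml) =>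
        build (d - (t+1)) x.1.1 x.1.2.1 x.1.2.2 x.2.1 x.2.2)
      (((DS (V := V) r (d - (t+1))) ×ˢ (Finset.univ : Finset (Bool × Bool))) ×ˢ
        ((HS d t).powerset ×ˢ (HS d t).powerset))

theorem hin_succ_build (t : ℕ) (s : State) (xs : List V) :
    hin r (t + 1) s xs = build xs.length (diag r xs) (pb (okE s)) (pb (okA s))
      (Finset.image (fun v => hin r t (stE s) (xs ++ [v])) Finset.univ)
      (Finset.image (fun v => hin r t (stA s) (xs ++ [v])) Finset.univ) := by
  rw [hin_succ, hinList, build, litsOfD]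
  rw [ite_pb (p := okE s), ite_pb (p := okA s)]

theorem hin_mem_HS (d : ℕ) : ∀ (t : ℕ) (s : State) (xs : List V),
    xs.length + t = d → hin r t s xs ∈ HS r d t := by
  intro t
  induction t with
  | zero =>
    intro s xs hlen
    rw [HS]
    exact Finset.mem_image.2 ⟨diag r xs,
      Finset.mem_image.2 ⟨xs, mem_tuplesF (by omega), rfl⟩, rfl⟩
  | succ t ih =>
    intro s xs hlen
    have hk : d - (t + 1) = xs.length := by omega
    rw [HS]
    refine Finset.mem_image.2 ⟨((diag r xs, (pb (okE s), pb (okA s))),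
      (Finset.image (fun v => hin r t (stE s) (xs ++ [v])) Finset.univ,
       Finset.image (fun v => hin r t (stA s) (xs ++ [v])) Finset.univ)), ?_, ?_⟩
    · refine Finset.mem_product.2 ⟨Finset.mem_product.2 ⟨?_, Finset.mem_univ _⟩,
        Finset.mem_product.2 ⟨?_, ?_⟩⟩
      · exact Finset.mem_image.2 ⟨xs, mem_tuplesF (by omega), rfl⟩
      · refine Finset.mem_powerset.2 ?_
        intro ψ hψ
        rcases Finset.mem_image.1 hψ with ⟨v, _, rfl⟩
        exact ih (stE s) (xs ++ [v]) (by simp; omega)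
      · refine Finset.mem_powerset.2 ?_
        intro ψ hψ
        rcases Finset.mem_image.1 hψ with ⟨v, _, rfl⟩
        exact ih (stA s) (xs ++ [v]) (by simp; omega)
    · rw [hk]
      exact (hin_succ_build r t s xs).symm

/-- Numerical bound for `(HS d t).card`. -/
def BB (d : ℕ) : ℕ → ℕ
  | 0 => d ^ d * 2 ^ (d * d)
  | (t+1) => 4 * (d ^ d * 2 ^ (d * d)) * (2 ^ (BB d t) * 2 ^ (BB d t))

theorem kk_mono {k d : ℕ} (h : k ≤ d) : k ^ k * 2 ^ (k * k) ≤ d ^ d * 2 ^ (d * d) := by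
  rcases Nat.eq_zero_or_pos d with rfl | hd
  · interval_cases k
    omega
  · have h1 : k ^ k ≤ d ^ d :=
      le_trans (Nat.pow_le_pow_left h k) (Nat.pow_le_pow_right hd h)
    have h2 : (2:ℕ) ^ (k * k) ≤ 2 ^ (d * d) :=
      Nat.pow_le_pow_right (by omega) (Nat.mul_le_mul h h)
    exact Nat.mul_le_mul h1 h2

theorem HS_card (d : ℕ) : ∀ t : ℕ, (HS (V := V) r d t).card ≤ BB d t := by
  intro t
  induction t with
  | zero =>
    rw [HS]
    calc (Finset.image (fun D => conj (litsOfD D)) (DS (V := V) r d)).card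
        ≤ (DS (V := V) r d).card := Finset.card_image_le
    _ ≤ d ^ d * 2 ^ (d * d) := DS_card r d
  | succ t ih =>
    have h1 : (HS (V := V) r d (t+1)).card ≤
        (((DS (V := V) r (d - (t+1))) ×ˢ (Finset.univ : Finset (Bool × Bool))) ×ˢ
        ((HS r d t).powerset ×ˢ (HS r d t).powerset)).card := by
      rw [HS]
      exact Finset.card_image_le
    rw [Finset.card_product, Finset.card_product, Finset.card_product,
      Finset.card_powerset] at h1
    have hds := (DS_card (V := V) r (d - (t+1))).trans (kk_mono (Nat.sub_le d (t+1)))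
    have hcard : (Finset.univ : Finset (Bool × Bool)).card = 4 := by decide
    rw [hcard] at h1
    have hpw : (2:ℕ) ^ (HS (V := V) r d t).card ≤ 2 ^ BB d t :=
      Nat.pow_le_pow_right (by omega) ih
    calc (HS (V := V) r d (t+1)).card ≤
        (DS (V := V) r (d - (t+1))).card * 4 * (2 ^ (HS r d t).card * 2 ^ (HS r d t).card) := by
          rw [mul_assoc] at h1 ⊢
          exact h1
    _ ≤ (d ^ d * 2 ^ (d * d)) * 4 * (2 ^ BB d t * 2 ^ BB d t) :=
        Nat.mul_le_mul (Nat.mul_le_mul hds (le_refl 4)) (Nat.mul_le_mul hpw hpw)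
    _ = BB d (t+1) := by rw [BB]; ring

/-- Numerical bound for the length of `hin`. -/
def LLb (d : ℕ) : ℕ → ℕ
  | 0 => 10 * d * d + 10
  | (t+1) => 2 * BB d t * (LLb d t + 4) + 12 * d * d + 12

theorem len_conj_lits (xs : List V) :
    (conj (litsOfD (diag r xs))).len ≤ 10 * xs.length * xs.length + 3 := by
  have h1 := len_conj (litsOfD (diag r xs))
  have h2 := sum_map_le 5 (litsOfD (diag r xs)) (fun φ => φ.len + 1)
    (fun φ hφ => by have := len_litsOfIdx_mem hφ; show φ.len + 1 ≤ 5; omega)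
  have h3 : (litsOfD (diag r xs)).length ≤ 2 * xs.length * xs.length := by
    simpa [litsOfD, length_diag] using length_litsOfIdx (diag r xs).length (dEntry (diag r xs))
  calc (conj (litsOfD (diag r xs))).len ≤ 3 + 5 * (litsOfD (diag r xs)).length := by omega
  _ ≤ 3 + 5 * (2 * xs.length * xs.length) := by omega
  _ ≤ 10 * xs.length * xs.length + 3 := by ring_nf; omega

theorem len_hin (d : ℕ) : ∀ (t : ℕ) (s : State) (xs : List V),
    xs.length + t = d → (hin r t s xs).len ≤ LLb d t := by
  intro t
  induction t with
  | zero =>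
    intro s xs hlen
    have := len_conj_lits r xs
    have hxl : xs.length ≤ d := by omega
    have h4 : 10 * xs.length * xs.length ≤ 10 * d * d := by nlinarith
    have h0 : hin r 0 s xs = conj (litsOfD (diag r xs)) := rfl
    rw [LLb, h0]
    linarith
  | succ t ih =>
    intro s xs hlen
    rw [hin_succ, hinList]
    have hxl : xs.length ≤ d := by omega
    set SE : Finset Fml := Finset.image (fun v => hin r t (stE s) (xs ++ [v])) Finset.univ with hSE
    set SA : Finset Fml := Finset.image (fun v => hin r t (stA s) (xs ++ [v])) Finset.univ with hSA
    have hSEcard : SE.card ≤ BB d t := by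
      refine le_trans (Finset.card_le_card ?_) (HS_card r d t)
      intro ψ hψ
      rcases Finset.mem_image.1 hψ with ⟨v, _, rfl⟩
      exact hin_mem_HS r d t (stE s) (xs ++ [v]) (by simp; omega)
    have hSAcard : SA.card ≤ BB d t := by
      refine le_trans (Finset.card_le_card ?_) (HS_card r d t)
      intro ψ hψ
      rcases Finset.mem_image.1 hψ with ⟨v, _, rfl⟩
      exact hin_mem_HS r d t (stA s) (xs ++ [v]) (by simp; omega)
    have hlenSE : ∀ ψ ∈ SE.toList, ψ.len ≤ LLb d t := by
      intro ψ hψ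
      rcases Finset.mem_image.1 (Finset.mem_toList.1 hψ) with ⟨v, _, rfl⟩
      exact ih (stE s) (xs ++ [v]) (by simp; omega)
    have hlenSA : ∀ ψ ∈ SA.toList, ψ.len ≤ LLb d t := by
      intro ψ hψ
      rcases Finset.mem_image.1 (Finset.mem_toList.1 hψ) with ⟨v, _, rfl⟩
      exact ih (stA s) (xs ++ [v]) (by simp; omega)
    have h1 := len_conj (litsOfD (diag r xs)
      ++ (if okE s then (SE.toList.map (Fml.ex xs.length)) else [])
      ++ (if okA s then [Fml.all xs.length (disj SA.toList)] else []))
    rw [List.map_append, List.map_append, List.sum_append, List.sum_append] at h1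
    -- bound the three sums
    have hs1 : ((litsOfD (diag r xs)).map (fun φ => φ.len + 1)).sum ≤
        10 * d * d := by
      have h2 := sum_map_le 5 (litsOfD (diag r xs)) (fun φ => φ.len + 1)
        (fun φ hφ => by have := len_litsOfIdx_mem hφ; show φ.len + 1 ≤ 5; omega)
      have h3 : (litsOfD (diag r xs)).length ≤ 2 * xs.length * xs.length := by
        simpa [litsOfD, length_diag] using length_litsOfIdx (diag r xs).length (dEntry (diag r xs))
      nlinarith
    have hs2 : (((if okE s then (SE.toList.map (Fml.ex xs.length)) else []) : List Fml).map
        (fun φ => φ.len + 1)).sum ≤ BB d t * (LLb d t + 3) := by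
      by_cases hok : okE s
      · rw [if_pos hok]
        have h2 := sum_map_le (LLb d t + 3) (SE.toList.map (Fml.ex xs.length))
          (fun φ => φ.len + 1) ?_
        · calc _ ≤ (LLb d t + 3) * (SE.toList.map (Fml.ex xs.length)).length := h2
          _ ≤ (LLb d t + 3) * BB d t := by
            apply Nat.mul_le_mul_left
            rw [List.length_map, Finset.length_toList]
            exact hSEcard
          _ = BB d t * (LLb d t + 3) := by ring
        · intro ψ hψ
          rcases List.mem_map.1 hψ with ⟨χ, hχ, rfl⟩
          have := hlenSE χ hχ
          show (Fml.ex xs.length χ).len + 1 ≤ LLb d t + 3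
          simp only [len]
          omega
      · rw [if_neg hok]; simp
    have hs3 : (((if okA s then [Fml.all xs.length (disj SA.toList)] else []) : List Fml).map
        (fun φ => φ.len + 1)).sum ≤ BB d t * (LLb d t + 1) + 7 := by
      by_cases hok : okA s
      · rw [if_pos hok]
        simp only [List.map_cons, List.map_nil, List.sum_cons, List.sum_nil]
        have h2 := len_disj SA.toList
        have h3 := sum_map_le (LLb d t + 1) SA.toList (fun φ => φ.len + 1)
          (fun φ hφ => by have := hlenSA φ hφ; show φ.len + 1 ≤ LLb d t + 1; omega)
        have h4 : (LLb d t + 1) * SA.toList.length ≤ (LLb d t + 1) * BB d t := by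
          apply Nat.mul_le_mul_left
          rw [Finset.length_toList]
          exact hSAcard
        simp only [len]
        have : (disj SA.toList).len ≤ 4 + (LLb d t + 1) * BB d t := by omega
        calc (disj SA.toList).len + 2 + 1 ≤ 4 + (LLb d t + 1) * BB d t + 3 := by omega
        _ = BB d t * (LLb d t + 1) + 7 := by ring
      · rw [if_neg hok]; simp
    calc (conj _).len ≤ 3 + (((litsOfD (diag r xs)).map (fun φ => φ.len + 1)).sum
        + (((if okE s then (SE.toList.map (Fml.ex xs.length)) else []) : List Fml).map
          (fun φ => φ.len + 1)).sum
        + (((if okA s then [Fml.all xs.length (disj SA.toList)] else []) : List Fml).map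
          (fun φ => φ.len + 1)).sum) := by omega
    _ ≤ 3 + (10 * d * d + BB d t * (LLb d t + 3) + (BB d t * (LLb d t + 1) + 7)) := by omega
    _ ≤ LLb d (t+1) := by
      rw [LLb]
      nlinarith [Nat.zero_le (BB d t), Nat.zero_le (LLb d t)]


/-- The disjoint sum of a digraph with itself. -/
def sumRel : V ⊕ V → V ⊕ V → Prop := fun x y =>
  match x, y with
  | Sum.inl u, Sum.inl v => r u v
  | Sum.inr u, Sum.inr v => r u v
  | _, _ => False

theorem sumRel_diag (w : V ⊕ V) : sumRel r w w ↔ r (Sum.elim id id w) (Sum.elim id id w) := by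
  cases w <;> exact Iff.rfl

theorem depth_le_one_transfer : ∀ (φ : Fml), φ.freeVars = ∅ → φ.depth ≤ 1 →
    ∀ (σ : ℕ → V) (τ : ℕ → V ⊕ V), (φ.eval r σ ↔ φ.eval (sumRel r) τ)
  | .eq i j, hfv, _, _, _ => by
    exfalso
    have : i ∈ (Fml.eq i j).freeVars := by simp [freeVars]
    rw [hfv] at this
    exact absurd this (Finset.notMem_empty i)
  | .rel i j, hfv, _, _, _ => by
    exfalso
    have : i ∈ (Fml.rel i j).freeVars := by simp [freeVars]
    rw [hfv] at this
    exact absurd this (Finset.notMem_empty i)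
  | .not φ, hfv, hd, σ, τ =>
    not_congr (depth_le_one_transfer φ hfv hd σ τ)
  | .and φ ψ, hfv, hd, σ, τ => by
    rcases Finset.union_eq_empty.1 hfv with ⟨h1, h2⟩
    exact and_congr
      (depth_le_one_transfer φ h1 (le_trans (le_max_left _ _) hd) σ τ)
      (depth_le_one_transfer ψ h2 (le_trans (le_max_right _ _) hd) σ τ)
  | .or φ ψ, hfv, hd, σ, τ => by
    rcases Finset.union_eq_empty.1 hfv with ⟨h1, h2⟩
    exact or_congr
      (depth_le_one_transfer φ h1 (le_trans (le_max_left _ _) hd) σ τ)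
      (depth_le_one_transfer ψ h2 (le_trans (le_max_right _ _) hd) σ τ)
  | .all i φ, hfv, hd, σ, τ => by
    have hd0 : φ.depth = 0 := by simp only [depth] at hd; omega
    have hsub : ∀ x ∈ φ.freeVars, x = i := by
      intro x hx
      by_contra hxi
      have : x ∈ (Fml.all i φ).freeVars := Finset.mem_erase.2 ⟨hxi, hx⟩
      rw [hfv] at this
      exact absurd this (Finset.notMem_empty x)
    constructor
    · intro h w
      refine (qf_transfer r (sumRel r) φ hd0
        (Function.update σ i (Sum.elim id id w)) (Function.update τ i w) ?_).1
        (h (Sum.elim id id w))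
      intro p hp q hq
      rw [hsub p hp, hsub q hq]
      rw [Function.update_self, Function.update_self]
      exact ⟨by simp, (sumRel_diag r w).symm⟩
    · intro h v
      refine (qf_transfer r (sumRel r) φ hd0
        (Function.update σ i v) (Function.update τ i (Sum.inl v)) ?_).2 (h (Sum.inl v))
      intro p hp q hq
      rw [hsub p hp, hsub q hq]
      rw [Function.update_self, Function.update_self]
      exact ⟨by simp, Iff.rfl⟩
  | .ex i φ, hfv, hd, σ, τ => by
    have hd0 : φ.depth = 0 := by simp only [depth] at hd; omega
    have hsub : ∀ x ∈ φ.freeVars, x = i := by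
      intro x hx
      by_contra hxi
      have : x ∈ (Fml.ex i φ).freeVars := Finset.mem_erase.2 ⟨hxi, hx⟩
      rw [hfv] at this
      exact absurd this (Finset.notMem_empty x)
    constructor
    · rintro ⟨v, hv⟩
      refine ⟨Sum.inl v, (qf_transfer r (sumRel r) φ hd0
        (Function.update σ i v) (Function.update τ i (Sum.inl v)) ?_).1 hv⟩
      intro p hp q hq
      rw [hsub p hp, hsub q hq]
      rw [Function.update_self, Function.update_self]
      exact ⟨by simp, Iff.rfl⟩
    · rintro ⟨w, hw⟩
      refine ⟨Sum.elim id id w, (qf_transfer r (sumRel r) φ hd0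
        (Function.update σ i (Sum.elim id id w)) (Function.update τ i w) ?_).2 hw⟩
      intro p hp q hq
      rw [hsub p hp, hsub q hq]
      rw [Function.update_self, Function.update_self]
      exact ⟨by simp, (sumRel_diag r w).symm⟩

theorem no_depth_le_one {ψ : Fml} (hdef : DDefines r ψ) (hdep : ψ.depth ≤ 1) : False := by
  have hniso : ¬ DIso r (sumRel r) := by
    rintro ⟨e, _⟩
    have hc := Fintype.card_congr e
    rw [Fintype.card_sum] at hc
    have := Fintype.card_pos (α := V)
    omega
  refine hdef.2.2 (V ⊕ V) inferInstance inferInstance (sumRel r) hniso ?_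
  intro τ
  exact (depth_le_one_transfer r ψ hdef.1 hdep (fun _ => Classical.arbitrary V) τ).1
    (hdef.2.1 _)

/-- The simulation sentence: `hin` at the empty tuple. -/
noncomputable def hinSentence (a d : ℕ) : Fml := hin r d (none, a) []

theorem hinSentence_sentence {a d : ℕ} (hd : 0 < d) : (hinSentence r a d).IsSentence := by
  have := freeVars_hin r d (none, a) [] (Or.inr hd)
  simp only [List.length_nil, Finset.range_zero] at this
  exact Finset.subset_empty.1 this

theorem hinSentence_altFml (a d : ℕ) : Fml.AltFml a (hinSentence r a d) := by
  refine ⟨negAtomic_hin r d (none, a) [], ?_⟩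
  intro l hl
  have := alt_hin r d (none, a) [] l hl
  simpa [consQ] using this

theorem hinSentence_len (a d : ℕ) : (hinSentence r a d).len ≤ LLb d d :=
  len_hin r d d (none, a) [] (by simp)

theorem hinSentence_defines {a d : ℕ} (hd : 0 < d) {ψ : Fml}
    (hψa : Fml.AltFml a ψ) (hψdef : DDefines r ψ) (hψdep : ψ.depth ≤ d) :
    DDefines r (hinSentence r a d) := by
  obtain ⟨v0⟩ := ‹Nonempty V›
  refine ⟨hinSentence_sentence r hd, ?_, ?_⟩
  · intro σ
    exact (eval_sentence r (hinSentence_sentence r hd) _ σ).1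
      (hin_self r v0 d (none, a) [])
  · intro W fW nW r' hniso hmod
    refine hψdef.2.2 W fW nW r' hniso ?_
    intro τ
    have w0 : W := Classical.choice nW
    have h1 : (hin r d (none, a) []).eval r' (fun _ => w0) := hmod _
    have h2 := hin_transfer r r' v0 w0 ψ d (none, a) [] (fun _ => w0) (fun n => n) h1
      hψa.1 (fragOK_of_altLe hψa.2) hψdep
      (by intro i hi; rw [hψdef.1] at hi; exact absurd hi (Finset.notMem_empty i))
      (hψdef.2.1 _)
    exact (eval_sentence r' hψdef.1 _ τ).1 h2

end Hin


section Arith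

theorem tower_succ (n : ℕ) : tower (n + 1) = 2 ^ tower n := rfl

theorem tower_pos (n : ℕ) : 0 < tower n := by
  cases n with
  | zero => norm_num [tower]
  | succ n => rw [tower_succ]; positivity

theorem tower_one_le (n : ℕ) : 1 ≤ tower n := tower_pos n

theorem le_two_pow (x : ℕ) : x ≤ 2 ^ x := Nat.le_of_lt ((Nat.lt_two_pow_self (n := x)))

theorem two_pow_mono {a b : ℕ} (h : a ≤ b) : (2:ℕ) ^ a ≤ 2 ^ b :=
  Nat.pow_le_pow_right (by norm_num) h

theorem tower_mono {a b : ℕ} (h : a ≤ b) : tower a ≤ tower b := by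
  induction b with
  | zero => interval_cases a; exact le_refl _
  | succ b ih =>
    rcases Nat.lt_or_ge a (b+1) with h' | h'
    · exact le_trans (ih (by omega)) (le_trans (le_two_pow (tower b)) (by rw [tower_succ]))
    · have : a = b + 1 := by omega
      subst this; exact le_refl _

theorem le_two_pow_pred {x : ℕ} (h : 1 ≤ x) : x ≤ 2 ^ (x - 1) := by
  have := (Nat.lt_two_pow_self (n := (x - 1)))
  omega

theorem logStar_eq {n : ℕ} (h : 2 ≤ n) : logStar n = logStar (Nat.log 2 n) + 1 := by
  rw [logStar]
  rw [dif_neg (by omega)]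

theorem logStar_one : logStar 1 = 0 := by rw [logStar]; norm_num

theorem logStar_two : logStar 2 = 1 := by
  rw [logStar_eq (le_refl 2),
    Nat.log_eq_of_pow_le_of_lt_pow (by norm_num) (by norm_num : (2:ℕ) < 2 ^ (1+1)),
    logStar_one]

theorem logStar_three : logStar 3 = 1 := by
  rw [logStar_eq (by norm_num),
    Nat.log_eq_of_pow_le_of_lt_pow (by norm_num) (by norm_num : (3:ℕ) < 2 ^ (1+1)),
    logStar_one]

/-- The fundamental inverse relation between `tower` and `logStar`. -/
theorem lt_tower_logStar : ∀ n : ℕ, 1 ≤ n → n + 1 ≤ tower (logStar n + 1) := by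
  intro n
  induction n using Nat.strong_induction_on with
  | _ n ih =>
    intro hn
    rcases Nat.lt_or_ge n 2 with h2 | h2
    · have : n = 1 := by omega
      subst this
      rw [logStar_one]
      norm_num [tower]
    · set l := Nat.log 2 n with hl
      have hl1 : 1 ≤ l := Nat.log_pos (by norm_num) h2
      have hln : l < n := Nat.log_lt_self 2 (by omega)
      have hih := ih l hln hl1
      have hup : n < 2 ^ (l + 1) := Nat.lt_pow_succ_log_self (by norm_num) n
      rw [logStar_eq h2]
      calc n + 1 ≤ 2 ^ (l + 1) := by omega
      _ ≤ 2 ^ (tower (logStar l + 1)) := two_pow_mono (by omega)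
      _ = tower (logStar l + 1 + 1) := (tower_succ _).symm

theorem dd_le_pow {d : ℕ} : d ^ d * 2 ^ (d * d) ≤ 2 ^ (2 * (d * d)) := by
  have h1 : d ^ d ≤ 2 ^ (d * d) := by
    calc d ^ d ≤ (2 ^ d) ^ d := Nat.pow_le_pow_left (le_two_pow d) d
    _ = 2 ^ (d * d) := by rw [← pow_mul]
  calc d ^ d * 2 ^ (d * d) ≤ 2 ^ (d * d) * 2 ^ (d * d) := Nat.mul_le_mul_right _ h1
  _ = 2 ^ (2 * (d * d)) := by rw [← pow_add]; ring_nf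

theorem pow_quad {d : ℕ} (h : 8 ≤ d) : 2 * d * d + 3 ≤ 2 ^ (d + 1) := by
  induction d with
  | zero => omega
  | succ d ih =>
    rcases Nat.lt_or_ge d 8 with h' | h'
    · have : d = 7 := by omega
      subst this
      norm_num
    · have := ih h'
      rw [pow_succ]
      nlinarith

theorem logStar_ge_two {d : ℕ} (h : 4 ≤ d) : 2 ≤ logStar d := by
  rw [logStar_eq (by omega)]
  have hl : 2 ≤ Nat.log 2 d := Nat.le_log_of_pow_le (by norm_num) (by norm_num; omega)
  rw [logStar_eq hl]
  omega

theorem base2d {d : ℕ} (h : 4 ≤ d) : 2 * d * d + 3 ≤ tower (logStar d + 2) := by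
  rcases Nat.lt_or_ge d 182 with h' | h'
  · have h2 := logStar_ge_two h
    have hmono : tower 4 ≤ tower (logStar d + 2) := tower_mono (by omega)
    have ht4 : tower 4 = 65536 := by norm_num [tower]
    nlinarith
  · have hcl := lt_tower_logStar d (by omega)
    calc 2 * d * d + 3 ≤ 2 ^ (d + 1) := pow_quad (by omega)
    _ ≤ 2 ^ (tower (logStar d + 1)) := two_pow_mono (by omega)
    _ = tower (logStar d + 2) := (tower_succ _).symm

theorem two_mul_le_two_pow (x : ℕ) : 2 * x ≤ 2 ^ (x + 1) := by
  have := (Nat.lt_two_pow_self (n := x))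
  rw [pow_succ]
  omega

theorem four_cube_le_pow {e : ℕ} (h : 4 ≤ e) : 4 * e^3 ≤ 4^e := by
  induction e with
  | zero => omega
  | succ e ihe =>
    rcases Nat.lt_or_ge e 4 with he' | he'
    · have he : e = 3 := by omega
      subst he
      norm_num
    · have hle := ihe he'
      have h1 : (e+1)^3 ≤ 4 * e^3 := by
        have hexp : (e+1)^3 = e^3 + 3*e^2 + 3*e + 1 := by ring
        have h2 : e^2 ≤ e^3 := Nat.pow_le_pow_right (by omega) (by omega)
        have h3 : e ≤ e^3 := Nat.le_self_pow (by omega) e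
        have h4 : 1 ≤ e^3 := Nat.one_le_iff_ne_zero.2 (by positivity)
        have h5 : 4 * e^2 ≤ e^3 := by
          calc 4 * e^2 ≤ e * e^2 := Nat.mul_le_mul_right _ he'
          _ = e^3 := by ring
        have h6 : e ≤ e^2 := Nat.le_self_pow (by omega) e
        have h7 : 1 ≤ e^2 := Nat.one_le_iff_ne_zero.2 (by positivity)
        linarith
      calc 4 * (e+1)^3 ≤ 4 * (4 * e^3) := by omega
      _ ≤ 4 * 4^e := by omega
      _ = 4^(e+1) := by rw [pow_succ]; ring

theorem succ_cube_le {d : ℕ} (h : 2 ≤ d) : 4 * (d+1)^3 ≤ tower (logStar d + 3) := by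
  rcases Nat.lt_or_ge d 4 with hd4 | hd4
  · have ht4 : tower 4 = 65536 := by norm_num [tower]
    have hls : logStar d = 1 := by
      interval_cases d
      · exact logStar_two
      · exact logStar_three
    rw [hls]
    interval_cases d <;> norm_num [ht4]
  have hcl := lt_tower_logStar d (by omega)
  have h2 : (2:ℕ) ^ (d + 1) ≤ tower (logStar d + 2) := by
    rw [tower_succ]; exact two_pow_mono (by omega)
  have h4 : (2:ℕ) ^ (2 * (d + 1)) ≤ tower (logStar d + 3) := by
    rw [tower_succ (logStar d + 2)]
    refine two_pow_mono (le_trans ?_ h2)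
    have hd1 : d + 1 ≤ 2 ^ d := by
      have := (Nat.lt_two_pow_self (n := d))
      omega
    calc 2 * (d + 1) ≤ 2 * 2 ^ d := by omega
    _ = 2 ^ (d + 1) := by rw [pow_succ]; ring
  have h5 : (2:ℕ) ^ (2 * (d+1)) = 4 ^ (d+1) := by
    rw [pow_mul]; norm_num
  have h6 : 4 * (d+1)^3 ≤ 4 ^ (d+1) := four_cube_le_pow (by omega)
  omega


theorem BB_succ (d t : ℕ) :
    BB d (t+1) = 4 * (d ^ d * 2 ^ (d * d)) * (2 ^ (BB d t) * 2 ^ (BB d t)) := rfl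

theorem BB_pos {d : ℕ} (hd : 1 ≤ d) : ∀ t, 1 ≤ BB d t := by
  intro t
  cases t with
  | zero =>
    show 1 ≤ d ^ d * 2 ^ (d * d)
    have : 0 < d ^ d * 2 ^ (d * d) := by positivity
    omega
  | succ t =>
    rw [BB_succ]
    have : 0 < 4 * (d ^ d * 2 ^ (d * d)) * (2 ^ (BB d t) * 2 ^ (BB d t)) := by positivity
    omega

theorem four_BB_le {d : ℕ} (hd : 1 ≤ d) (t : ℕ) : 4 * BB d t ≤ BB d (t+1) := by
  have h1 : 1 ≤ BB d t := BB_pos hd t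
  have h2 : 4 * BB d t ≤ 4 ^ (BB d t) := by
    have : ∀ x : ℕ, 1 ≤ x → 4 * x ≤ 4 ^ x := by
      intro x hx
      induction x with
      | zero => omega
      | succ x ihx =>
        rcases Nat.eq_zero_or_pos x with rfl | hx'
        · norm_num
        · have := ihx hx'
          have h4 : (4:ℕ) ≤ 4 ^ x := by
            calc (4:ℕ) = 4^1 := by norm_num
            _ ≤ 4^x := Nat.pow_le_pow_right (by norm_num) hx'
          rw [pow_succ]
          nlinarith
    exact this _ h1
  have h3 : (4:ℕ) ^ (BB d t) = 2 ^ (BB d t) * 2 ^ (BB d t) := by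
    rw [← pow_add]
    rw [show (4:ℕ) = 2^2 by norm_num, ← pow_mul]
    ring_nf
  rw [BB_succ]
  have h5 : 1 ≤ d ^ d * 2 ^ (d * d) := by
    have : 0 < d ^ d * 2 ^ (d * d) := by positivity
    omega
  calc 4 * BB d t ≤ 2 ^ (BB d t) * 2 ^ (BB d t) := by rw [← h3]; exact h2
  _ ≤ 4 * (d ^ d * 2 ^ (d * d)) * (2 ^ (BB d t) * 2 ^ (BB d t)) := by nlinarith

theorem four_BB_le_two_pow {d t : ℕ} :
    4 * BB d (t+1) ≤ 2 ^ (2 * (d * d) + 2 * BB d t + 4) := by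
  rw [BB_succ]
  have h1 := dd_le_pow (d := d)
  calc 4 * (4 * (d ^ d * 2 ^ (d * d)) * (2 ^ (BB d t) * 2 ^ (BB d t)))
      ≤ 4 * (4 * (2 ^ (2*(d*d))) * (2 ^ (BB d t) * 2 ^ (BB d t))) := by nlinarith
  _ = 2 ^ (2 * (d * d) + 2 * BB d t + 4) := by
      rw [show (4:ℕ) = 2^2 by norm_num]
      rw [← pow_add, ← pow_add, ← pow_add, ← pow_add]
      congr 1
      ring

/-- The main numerical invariant. -/
theorem NI {d : ℕ} (hd : 2 ≤ d) :
    ∀ t, 4 * BB d t + 4 * (d+1)^3 ≤ tower (t + logStar d + 3) := by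
  intro t
  induction t with
  | zero =>
    show 4 * (d ^ d * 2 ^ (d * d)) + 4 * (d+1)^3 ≤ tower (0 + logStar d + 3)
    rw [Nat.zero_add]
    rcases Nat.lt_or_ge d 4 with hd4 | hd4
    · have hls : logStar d = 1 := by
        interval_cases d
        · exact logStar_two
        · exact logStar_three
      rw [hls]
      have ht4 : tower 4 = 65536 := by norm_num [tower]
      interval_cases d <;> norm_num [ht4]
    · have h1 : 4 * (d ^ d * 2 ^ (d * d)) ≤ 2 ^ (2*(d*d) + 2) := by
        have := dd_le_pow (d := d)
        calc 4 * (d ^ d * 2 ^ (d * d)) ≤ 4 * 2 ^ (2*(d*d)) := by omega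
        _ = 2 ^ (2*(d*d) + 2) := by rw [pow_add]; ring_nf
      have h2 : 4 * (d+1)^3 ≤ 2 ^ (2*(d*d) + 2) := by
        have ha : d + 1 ≤ 2 ^ d := by have := (Nat.lt_two_pow_self (n := d)); omega
        have hb : (d+1)^3 ≤ 2 ^ (3*d) := by
          calc (d+1)^3 ≤ (2^d)^3 := Nat.pow_le_pow_left ha 3
          _ = 2 ^ (3*d) := by rw [← pow_mul]; ring_nf
        have hc : 3*d + 2 ≤ 2*(d*d) + 2 := by nlinarith
        calc 4 * (d+1)^3 ≤ 4 * 2^(3*d) := by omega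
        _ = 2 ^ (3*d + 2) := by rw [pow_add]; ring_nf
        _ ≤ 2 ^ (2*(d*d) + 2) := two_pow_mono hc
      have h3 : (2:ℕ) ^ (2*(d*d) + 2) + 2 ^ (2*(d*d)+2) = 2 ^ (2*(d*d) + 3) := by
        rw [pow_succ (n := 2*(d*d)+2)]
        ring
      have h4 : 2*(d*d) + 3 ≤ tower (logStar d + 2) := by
        have := base2d hd4
        calc 2*(d*d) + 3 = 2*d*d + 3 := by ring_nf
        _ ≤ tower (logStar d + 2) := this
      calc 4 * (d ^ d * 2 ^ (d * d)) + 4 * (d+1)^3 ≤ 2 ^ (2*(d*d)+3) := by omega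
      _ ≤ 2 ^ (tower (logStar d + 2)) := two_pow_mono h4
      _ = tower (logStar d + 3) := (tower_succ _).symm
  | succ t ih =>
    set T := tower (t + logStar d + 3) with hT
    have hT1 : 1 ≤ T := tower_one_le _
    have haux : 4*(d*d) + 10 ≤ T := by
      have h1 : 4 * (d*d) + 10 ≤ 4 * (d+1)^3 := by nlinarith
      omega
    have hE : 2*(d*d) + 2 * BB d t + 5 ≤ T := by
      have h1 : 4 * BB d t ≤ T := by omega
      omega
    have h2 : 4 * BB d (t+1) ≤ 2 ^ (T - 1) := by
      calc 4 * BB d (t+1) ≤ 2 ^ (2 * (d * d) + 2 * BB d t + 4) := four_BB_le_two_pow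
      _ ≤ 2 ^ (T - 1) := two_pow_mono (by omega)
    have h3 : 4 * (d+1)^3 ≤ 2 ^ (T - 1) := by
      have ha : 4 * (d+1)^3 ≤ tower (logStar d + 3) := succ_cube_le hd
      have hb : tower (logStar d + 3) ≤ T := tower_mono (by omega)
      have hc : T ≤ 2 ^ (T - 1) := le_two_pow_pred hT1
      omega
    have h4 : (2:ℕ) ^ (T-1) + 2 ^ (T-1) = 2 ^ T := by
      have h5 : (2:ℕ)^(T-1) * 2 = 2^(T-1+1) := (pow_succ 2 (T-1)).symm
      have h6 : T - 1 + 1 = T := by omega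
      rw [h6] at h5
      omega
    have : tower (t + 1 + logStar d + 3) = 2 ^ T := by
      rw [hT, ← tower_succ]
      congr 1
      omega
    rw [this]
    omega

/-- Sum of the `BB`s is controlled by the top term. -/
theorem SL {d : ℕ} (hd : 1 ≤ d) : ∀ k, 2 * (∑ j ∈ Finset.range k, BB d j) ≤ BB d k := by
  intro k
  induction k with
  | zero => simp
  | succ k ih =>
    rw [Finset.sum_range_succ]
    have h1 := four_BB_le hd k
    omega

/-- Exponent for the length bound. -/
def Gexp (d t : ℕ) : ℕ := 2 * (∑ j ∈ Finset.range t, BB d j) + (t+1) * (2*(d*d)+12)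

theorem LLb_succ (d t : ℕ) :
    LLb d (t+1) = 2 * BB d t * (LLb d t + 4) + 12*d*d + 12 := rfl

theorem LLb_zero (d : ℕ) : LLb d 0 = 10*d*d + 10 := rfl

/-- The length-bound claim. -/
theorem LC {d : ℕ} (hd : 2 ≤ d) : ∀ t, LLb d (t+1) ≤ BB d t * 2 ^ (Gexp d t) := by
  intro t
  induction t with
  | zero =>
    rw [LLb_succ, LLb_zero]
    have hB : 1 ≤ BB d 0 := BB_pos (by omega) 0
    have hG : Gexp d 0 = 2*(d*d)+12 := by simp [Gexp]
    rw [hG]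
    have h1 : (32*(d*d)+40 : ℕ) ≤ 2 ^ (2*(d*d)+12) := by
      have ha : 2*(d*d) + 1 ≤ 2 ^ (2*(d*d)) := by
        have := Nat.lt_two_pow_self (n := 2*(d*d))
        omega
      have hb : (2:ℕ) ^ (2*(d*d)+12) = 4096 * 2 ^ (2*(d*d)) := by
        rw [pow_add]
        ring
      nlinarith
    calc 2 * BB d 0 * (10*d*d + 10 + 4) + 12*d*d + 12
        ≤ BB d 0 * (32*(d*d)+40) := by nlinarith
    _ ≤ BB d 0 * 2 ^ (2*(d*d)+12) := Nat.mul_le_mul_left _ h1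
  | succ t ih =>
    rw [LLb_succ]
    have hB1 : 1 ≤ BB d (t+1) := BB_pos (by omega) (t+1)
    have hBt : 1 ≤ BB d t := BB_pos (by omega) t
    have hGrec : Gexp d (t+1) = Gexp d t + (2 * BB d t + (2*(d*d)+12)) := by
      rw [Gexp, Gexp, Finset.sum_range_succ]
      ring
    have hkey : 2 * BB d t + 12*d*d + 20 ≤ 2 ^ (2 * BB d t + (2*(d*d)+12)) := by
      have ha : 2 * BB d t + 1 ≤ 2 ^ (2 * BB d t) := by
        have := (Nat.lt_two_pow_self (n := (2 * BB d t)))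
        omega
      have hb : 12*d*d + 20 + 1 ≤ 2 ^ (2*(d*d)+12) := by
        have hc : (d*d) + 1 ≤ 2 ^ (d*d) := by
          have := (Nat.lt_two_pow_self (n := (d*d)))
          omega
        have hdd : (2:ℕ) ^ (2*(d*d)+12) = 4096 * (2^(d*d) * 2^(d*d)) := by
          rw [show 2*(d*d)+12 = (d*d) + (d*d) + 12 by ring, pow_add, pow_add]
          ring
        nlinarith
      have hsplit : (2:ℕ) ^ (2 * BB d t + (2*(d*d)+12)) =
          2 ^ (2 * BB d t) * 2 ^ (2*(d*d)+12) := by rw [pow_add]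
      rw [hsplit]
      nlinarith
    calc 2 * BB d (t+1) * (LLb d (t+1) + 4) + 12*d*d + 12
        ≤ 2 * BB d (t+1) * (BB d t * 2 ^ (Gexp d t) + 4) + 12*d*d + 12 := by nlinarith
    _ ≤ BB d (t+1) * (2 ^ (Gexp d t) * (2 * BB d t + 12*d*d + 20)) := by
        have h1 : (1:ℕ) ≤ 2 ^ (Gexp d t) := Nat.one_le_two_pow
        have e1 : 2 * BB d (t+1) * (BB d t * 2 ^ (Gexp d t) + 4) + 12*d*d + 12
            = 2 * BB d (t+1) * BB d t * 2 ^ (Gexp d t) + 8 * BB d (t+1) + (12*d*d + 12) := by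
          ring
        have e2 : BB d (t+1) * (2 ^ (Gexp d t) * (2 * BB d t + 12*d*d + 20))
            = 2 * BB d (t+1) * BB d t * 2 ^ (Gexp d t)
              + BB d (t+1) * 2 ^ (Gexp d t) * (12*d*d + 20) := by
          ring
        have hq : BB d (t+1) ≤ BB d (t+1) * 2 ^ (Gexp d t) :=
          Nat.le_mul_of_pos_right _ (by positivity)
        have h3 : 8 * BB d (t+1) + (12*d*d + 12) ≤
            BB d (t+1) * 2 ^ (Gexp d t) * (12*d*d + 20) := by nlinarith
        omega
    _ ≤ BB d (t+1) * (2 ^ (Gexp d t) * 2 ^ (2 * BB d t + (2*(d*d)+12))) :=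
        Nat.mul_le_mul_left _ (Nat.mul_le_mul_left _ hkey)
    _ = BB d (t+1) * 2 ^ (Gexp d (t+1)) := by rw [hGrec, pow_add, pow_add]; ring

/-- Final arithmetic: the length bound beats the tower. -/
theorem final_len {d : ℕ} (hd : 2 ≤ d) : LLb d d < tower (d + logStar d + 2) := by
  obtain ⟨e, hde⟩ : ∃ e, d = e + 2 := ⟨d - 2, by omega⟩
  have hBe : 1 ≤ BB d e := BB_pos (by omega) e
  have hA : 4 * BB d (e+1) ≤ 2 ^ (2 * (d*d) + 2 * BB d e + 4) := four_BB_le_two_pow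
  have hB : LLb d (e+1) ≤ 2 ^ (BB d e + Gexp d e) := by
    calc LLb d (e+1) ≤ BB d e * 2 ^ (Gexp d e) := LC hd e
    _ ≤ 2 ^ (BB d e) * 2 ^ (Gexp d e) := Nat.mul_le_mul_right _ (le_two_pow _)
    _ = 2 ^ (BB d e + Gexp d e) := (pow_add 2 _ _).symm
  -- expand the final level
  have hdd : LLb d d = 2 * BB d (e+1) * (LLb d (e+1) + 4) + 12*d*d + 12 := by
    have h0 := LLb_succ d (e+1)
    have he2 : e + 1 + 1 = d := by omega
    rwa [he2] at h0
  set Q1 : ℕ := 2 * (d*d) + 2 * BB d e + 4 with hQ1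
  set Q2 : ℕ := BB d e + Gexp d e with hQ2
  have step1 : 2 * BB d (e+1) * (LLb d (e+1) + 4) ≤ 2 ^ Q1 * (2 ^ Q2 + 4) := by
    have h1 : 2 * BB d (e+1) ≤ 2 ^ Q1 := by omega
    have h2 : LLb d (e+1) + 4 ≤ 2 ^ Q2 + 4 := by omega
    exact Nat.mul_le_mul h1 h2
  have step2 : (2:ℕ) ^ Q1 * (2 ^ Q2 + 4) ≤ 2 ^ (Q1 + Q2 + 3) := by
    have h1 : (2:ℕ) ^ Q2 + 4 ≤ 8 * 2 ^ Q2 := by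
      have : (1:ℕ) ≤ 2 ^ Q2 := Nat.one_le_two_pow
      omega
    calc (2:ℕ) ^ Q1 * (2 ^ Q2 + 4) ≤ 2 ^ Q1 * (8 * 2 ^ Q2) :=
      Nat.mul_le_mul_left _ h1
    _ = 2 ^ (Q1 + Q2 + 3) := by rw [pow_add, pow_add]; norm_num; ring
  have step3 : 12*d*d + 12 ≤ 2 ^ (Q1 + Q2 + 3) := by
    have h1 : 12*d*d + 12 ≤ 2 ^ (2*(d*d) + 4) := by
      have ha : d*d + 1 ≤ 2 ^ (d*d) := by
        have := (Nat.lt_two_pow_self (n := (d*d)))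
        omega
      have hb : (2:ℕ) ^ (2*(d*d)+4) = 16 * (2^(d*d) * 2^(d*d)) := by
        rw [show 2*(d*d)+4 = (d*d) + (d*d) + 4 by ring, pow_add, pow_add]
        ring
      nlinarith
    have h2 : 2*(d*d) + 4 ≤ Q1 + Q2 + 3 := by omega
    exact le_trans h1 (two_pow_mono h2)
  have hLL : LLb d d ≤ 2 ^ (Q1 + Q2 + 4) := by
    have : (2:ℕ) ^ (Q1+Q2+3) + 2 ^ (Q1+Q2+3) = 2 ^ (Q1+Q2+4) := by
      rw [show Q1+Q2+4 = (Q1+Q2+3)+1 by ring, pow_succ]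
      ring
    omega
  -- bound the exponent
  have hG : Gexp d e ≤ BB d e + 2*(d*d*d) + 12*d + (2*(d*d)+12) := by
    have h1 : 2 * (∑ j ∈ Finset.range e, BB d j) ≤ BB d e := SL (by omega) e
    have h2 : (e+1) * (2*(d*d)+12) ≤ d * (2*(d*d)+12) := by
      have : e + 1 ≤ d := by omega
      exact Nat.mul_le_mul_right _ this
    have h3 : d * (2*(d*d)+12) = 2*(d*d*d) + 12*d := by ring
    rw [Gexp]
    omega
  have hX : Q1 + Q2 + 4 + 2 ≤ 4 * BB d e + 4*(d+1)^3 := by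
    have hpoly : 2*(d*d) + 4 + 2*(d*d*d) + 12*d + (2*(d*d)+12) + 6 ≤ 4*(d+1)^3 := by
      nlinarith
    omega
  have hNI : 4 * BB d e + 4*(d+1)^3 ≤ tower (d + logStar d + 1) := by
    have := NI hd e
    have heq : e + logStar d + 3 = d + logStar d + 1 := by omega
    rwa [heq] at this
  have hexp : Q1 + Q2 + 4 + 1 ≤ tower (d + logStar d + 1) := by omega
  have hfin : 2 * LLb d d ≤ 2 ^ (tower (d + logStar d + 1)) := by
    calc 2 * LLb d d ≤ 2 * 2 ^ (Q1 + Q2 + 4) := by omega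
    _ = 2 ^ (Q1 + Q2 + 4 + 1) := by rw [pow_succ]; ring
    _ ≤ 2 ^ (tower (d + logStar d + 1)) := two_pow_mono hexp
  have htow : tower (d + logStar d + 2) = 2 ^ (tower (d + logStar d + 1)) := tower_succ _
  have h2 : (2:ℕ) ≤ 2 ^ (tower (d + logStar d + 1)) := by
    calc (2:ℕ) = 2^1 := by norm_num
    _ ≤ _ := two_pow_mono (tower_one_le _)
  rw [htow]
  omega

end Arith

end Aux

theorem statement_11 (a : ℕ) {V : Type} [Fintype V] [Nonempty V]
    (r : V → V → Prop) :
    Lalt a r < tower (Dalt a r + logStar (Dalt a r) + 2) := by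
  classical
  by_cases hS : {n : ℕ | ∃ φ : Fml, Fml.AltFml a φ ∧ DDefines r φ ∧ φ.depth = n}.Nonempty
  · have hmem : Dalt a r ∈ {n : ℕ | ∃ φ : Fml, Fml.AltFml a φ ∧ DDefines r φ ∧ φ.depth = n} :=
      Nat.sInf_mem hS
    obtain ⟨ψ, hψa, hψdef, hψdep⟩ := hmem
    set d := Dalt a r with hd
    have hd2 : 2 ≤ d := by
      by_contra hc
      push_neg at hc
      exact Aux.no_depth_le_one r hψdef (by omega)
    have hΘdef := Aux.hinSentence_defines r (a := a) (d := d) (by omega) hψa hψdef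
      (le_of_eq hψdep)
    have hΘalt := Aux.hinSentence_altFml r a d
    have hlen := Aux.hinSentence_len r a d
    have hLle : Lalt a r ≤ (Aux.hinSentence r a d).len := by
      apply Nat.sInf_le
      exact ⟨Aux.hinSentence r a d, hΘalt, hΘdef, rfl⟩
    calc Lalt a r ≤ (Aux.hinSentence r a d).len := hLle
    _ ≤ Aux.LLb d d := hlen
    _ < tower (d + logStar d + 2) := Aux.final_len hd2
  · have hLset : {n : ℕ | ∃ φ : Fml, Fml.AltFml a φ ∧ DDefines r φ ∧ φ.len = n} = ∅ := by
      ext n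
      simp only [Set.mem_setOf_eq, Set.mem_empty_iff_false, iff_false]
      rintro ⟨φ, h1, h2, _⟩
      exact hS ⟨φ.depth, φ, h1, h2, rfl⟩
    have hL : Lalt a r = 0 := by
      unfold Lalt
      rw [hLset, Nat.sInf_empty]
    rw [hL]
    exact Aux.tower_pos _

end PaperFO
end
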